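/- arXiv:1603.04605 — 8 statements merged into one kernel-verified Lean document; each statement's English description precedes it below -/
import Mathlib

section
/- If 0 < δ ≤ min_i dⁱ and the weight vector w ∈ ℝ^q has nonnegative entries and satisfies the recentering condition Cᵀ·diag(1/d¹,…,1/d^q)·(𝟙+w) = 0, then the recentered relaxed barrier function satisfies the global quadratic upper bound B̂_P(ξ) ≤ ξᵀ M ξ for all ξ ∈ ℝ^r, where M = (1/(2δ²))·Cᵀ·diag(1+w¹,…,1+w^q)·C. -/
open Matrix

/-- The relaxed logarithmic barrier function with relaxation parameter `δ`. -/
noncomputable def Bhat (δ z : ℝ) : ℝ :=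
  if δ < z then -Real.log z
  else (1 / 2) * (((z - 2 * δ) / δ) ^ 2 - 1) - Real.log δ

/-- The (weighting-)recentered relaxed logarithmic barrier function for the polytope
`P = {ξ : C ξ ≤ d}`:  `B̂_P(ξ) = Σ_i (1 + wⁱ)(B̂(−Cⁱξ + dⁱ) + ln dⁱ)`. -/
noncomputable def BhatP {q r : ℕ} (δ : ℝ) (C : Matrix (Fin q) (Fin r) ℝ)
    (d w : Fin q → ℝ) (ξ : Fin r → ℝ) : ℝ :=
  ∑ i, (1 + w i) * (Bhat δ (-(C.mulVec ξ i) + d i) + Real.log (d i))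

/-!
On `z ≤ δ` the relaxed barrier is the second-order Taylor polynomial of `-log` at `δ`, so `B̂` has
curvature at most `1/δ²` everywhere. Each summand of `B̂_P` is therefore bounded by the first-order
expansion of `B̂` at `dⁱ` plus `(Cⁱξ)²/(2δ²)`. The recentering condition says exactly that the
weighted first-order terms `(1 + wⁱ) Cⁱξ / dⁱ` sum to zero, leaving the quadratic form `ξᵀ M ξ`.
-/

namespace Real

lemma log_le_sub_inv_div_two {t : ℝ} (ht : 1 ≤ t) : log t ≤ (t - t⁻¹) / 2 := by
  rw [← sinh_log (by linarith)]
  exact self_le_sinh_iff.mpr (log_nonneg ht)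

lemma two_mul_sub_one_div_add_one_le_log {s : ℝ} (hs : 1 ≤ s) :
    2 * (s - 1) / (s + 1) ≤ log s := by
  have hx : (s - 1) / (s + 1) < 1 := (div_lt_one (by linarith)).mpr (by linarith)
  have h := sum_range_le_log_div (div_nonneg (by linarith) (by linarith)) hx 1
  have hs' : (1 + (s - 1) / (s + 1)) / (1 - (s - 1) / (s + 1)) = s := by
    field_simp
    ring
  rw [hs'] at h
  norm_num at h
  rw [mul_div_assoc]
  linarith

/-- `-log` lies below its tangent at `b` plus the quadratic term with curvature `1/m²`, the bound
for `(-log)'' = 1/x²` on `[m, ∞)`. -/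
lemma log_sub_log_le_quadratic {m a b : ℝ} (hm : 0 < m) (ha : m ≤ a) (hb : m ≤ b) :
    log b - log a ≤ (b - a) / b + (b - a) ^ 2 / (2 * m ^ 2) := by
  have ha0 : 0 < a := hm.trans_le ha
  have hb0 : 0 < b := hm.trans_le hb
  rcases le_or_gt a b with hab | hba
  · have h := log_le_sub_inv_div_two ((one_le_div ha0).mpr hab)
    rw [log_div hb0.ne' ha0.ne'] at h
    have hmab : m ^ 2 ≤ a * b := by nlinarith
    have hsplit : (b / a - (b / a)⁻¹) / 2 = (b - a) / b + (b - a) ^ 2 / (2 * (a * b)) := by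
      field_simp
      ring
    have hsq : (b - a) ^ 2 / (2 * (a * b)) ≤ (b - a) ^ 2 / (2 * m ^ 2) := by
      gcongr
    linarith
  · have h := two_mul_sub_one_div_add_one_le_log ((one_le_div hb0).mpr hba.le)
    rw [log_div ha0.ne' hb0.ne'] at h
    have hmab : 2 * m ^ 2 ≤ b * (a + b) := by nlinarith
    have hsplit : 2 * (a / b - 1) / (a / b + 1) = -((b - a) / b) - (b - a) ^ 2 / (b * (a + b)) := by
      field_simp
      ring
    have hsq : (b - a) ^ 2 / (b * (a + b)) ≤ (b - a) ^ 2 / (2 * m ^ 2) := by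
      gcongr
    linarith

end Real

open Real

lemma Bhat_of_lt {δ z : ℝ} (h : δ < z) : Bhat δ z = -log z := if_pos h

lemma Bhat_of_le {δ z : ℝ} (hδ : δ ≠ 0) (h : z ≤ δ) :
    Bhat δ z = -log δ - (z - δ) / δ + (z - δ) ^ 2 / (2 * δ ^ 2) := by
  rw [Bhat, if_neg h.not_gt]
  field_simp
  ring

lemma Bhat_sub_add_log_le {δ d : ℝ} (hδ : 0 < δ) (hδd : δ ≤ d) (u : ℝ) :
    Bhat δ (d - u) + log d ≤ u / d + u ^ 2 / (2 * δ ^ 2) := by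
  rcases lt_or_ge δ (d - u) with h | h
  · have := log_sub_log_le_quadratic hδ h.le hδd
    rw [Bhat_of_lt h]
    simp only [sub_sub_cancel] at this
    linarith
  · -- pass through `z = δ`, where the two branches of `Bhat` meet
    have hd : 0 < d := hδ.trans_le hδd
    have hlog := log_sub_log_le_quadratic hδ le_rfl hδd
    have hgap : u / d + u ^ 2 / (2 * δ ^ 2) -
        ((d - δ) / d + (d - δ) ^ 2 / (2 * δ ^ 2) - (d - u - δ) / δ + (d - u - δ) ^ 2 / (2 * δ ^ 2))
        = (δ - (d - u)) * (d - δ) ^ 2 / (d * δ ^ 2) := by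
      field_simp
      ring
    have hnonneg : 0 ≤ (δ - (d - u)) * (d - δ) ^ 2 / (d * δ ^ 2) := by
      have : 0 ≤ δ - (d - u) := by linarith
      positivity
    rw [Bhat_of_le hδ.ne' h]
    linarith

lemma Matrix.dotProduct_transpose_diagonal_mul_mulVec {m n R : Type*} [Fintype m] [Fintype n]
    [DecidableEq m] [CommSemiring R] (C : Matrix m n R) (v : m → R) (ξ : n → R) :
    ξ ⬝ᵥ (Cᵀ * diagonal v * C) *ᵥ ξ = ∑ i, v i * (C *ᵥ ξ) i ^ 2 := by
  rw [← mulVec_mulVec, ← mulVec_mulVec, dotProduct_mulVec, vecMul_transpose]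
  simp only [dotProduct, mulVec_diagonal, sq]
  exact Finset.sum_congr rfl fun i _ => by ring

theorem recentered_relaxed_barrier_quadratic_upper_bound_general
    {q r : ℕ} (δ : ℝ) (C : Matrix (Fin q) (Fin r) ℝ) (d w : Fin q → ℝ)
    (hδ : 0 < δ) (hδd : ∀ i, δ ≤ d i)
    (hw : ∀ i, 0 ≤ w i)
    (hrecenter : Cᵀ.mulVec (fun i => (1 / d i) * (1 + w i)) = 0) :
    ∀ ξ : Fin r → ℝ,
      BhatP δ C d w ξ ≤
        ξ ⬝ᵥ ((1 / (2 * δ ^ 2)) •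
          (Cᵀ * Matrix.diagonal (fun i => 1 + w i) * C)).mulVec ξ := by
  intro ξ
  set u := C *ᵥ ξ
  have hlinear : ∑ i, (1 + w i) * (u i / d i) = 0 := by
    have h : ξ ⬝ᵥ Cᵀ *ᵥ (fun i => (1 / d i) * (1 + w i)) = 0 := by
      rw [hrecenter, dotProduct_zero]
    rw [dotProduct_mulVec, vecMul_transpose] at h
    rw [← h]
    exact Finset.sum_congr rfl fun i _ => by ring
  have hquadratic : ξ ⬝ᵥ ((1 / (2 * δ ^ 2)) • (Cᵀ * diagonal (fun i => 1 + w i) * C)) *ᵥ ξ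
      = ∑ i, (1 + w i) * (u i ^ 2 / (2 * δ ^ 2)) := by
    rw [smul_mulVec, dotProduct_smul, dotProduct_transpose_diagonal_mul_mulVec, smul_eq_mul,
      Finset.mul_sum]
    exact Finset.sum_congr rfl fun i _ => by ring
  calc BhatP δ C d w ξ = ∑ i, (1 + w i) * (Bhat δ (d i - u i) + log (d i)) := by
        simp only [BhatP, neg_add_eq_sub, u]
    _ ≤ ∑ i, (1 + w i) * (u i / d i + u i ^ 2 / (2 * δ ^ 2)) :=
        Finset.sum_le_sum fun i _ => mul_le_mul_of_nonneg_left
          (Bhat_sub_add_log_le hδ (hδd i) (u i)) (by linarith [hw i])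
    _ = _ := by
        simp only [mul_add, Finset.sum_add_distrib, hlinear, zero_add, hquadratic]

/-- If `0 < δ ≤ min_i dⁱ`, the weights `w` are nonnegative and satisfy the recentering
condition `Cᵀ diag(1/d¹,…,1/d^q)(𝟙 + w) = 0`, then the recentered relaxed barrier function
satisfies the global quadratic bound `B̂_P(ξ) ≤ ξᵀ M ξ` with
`M = (1/(2δ²)) Cᵀ diag(1+w¹,…,1+w^q) C`. -/
theorem recentered_relaxed_barrier_quadratic_upper_bound
    {q r : ℕ} (δ : ℝ) (C : Matrix (Fin q) (Fin r) ℝ) (d w : Fin q → ℝ)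
    (hδ : 0 < δ) (hδd : ∀ i, δ ≤ d i)
    (hd : ∀ i, 0 < d i) (hw : ∀ i, 0 ≤ w i)
    (hrecenter : Cᵀ.mulVec (fun i => (1 / d i) * (1 + w i)) = 0) :
    ∀ ξ : Fin r → ℝ,
      BhatP δ C d w ξ ≤
        ξ ⬝ᵥ ((1 / (2 * δ ^ 2)) •
          (Cᵀ * Matrix.diagonal (fun i => 1 + w i) * C)).mulVec ξ :=
  recentered_relaxed_barrier_quadratic_upper_bound_general δ C d w hδ hδd hw hrecenter
end

section
/- (Lemma 1, part i) Suppose the quadratic part q(U,x) := (1/2)UᵀHU + xᵀFU + xᵀYx is positive semidefinite in (U,x), ε > 0, and the combined constraint polytope Z = {(U,x) ∈ ℝ^{Nm}×ℝⁿ : GU − Ex ≤ d} is compact, with 0 < δ ≤ min_i dⁱ and the weight vector w ∈ ℝ^q having nonnegative entries and satisfying the recentering condition making B̂_xu positive definite (the gradient of B̂_xu vanishing at the origin). Then there exist class-K∞ functions α and ᾱ such that α(‖(U,x)‖) ≤ Ĵ_N(U,x) ≤ ᾱ(‖(U,x)‖) for all (U,x) ∈ ℝ^{Nm} × ℝⁿ.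 -/
open Matrix

/-- Recentered relaxed logarithmic barrier for the combined constraints `GU ≤ d + Ex`. -/
noncomputable def Bxu {nm n q : ℕ} (δ : ℝ) (G : Matrix (Fin q) (Fin nm) ℝ)
    (E : Matrix (Fin q) (Fin n) ℝ) (d w : Fin q → ℝ)
    (U : Fin nm → ℝ) (x : Fin n → ℝ) : ℝ :=
  ∑ i, (1 + w i) * (Bhat δ (-(G.mulVec U i) + E.mulVec x i + d i) + Real.log (d i))

/-- The relaxed barrier function based MPC cost in condensed form:
`Ĵ_N(U,x) = (1/2)UᵀHU + xᵀFU + xᵀYx + ε B̂_xu(U,x)`. -/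
noncomputable def Jcost {nm n q : ℕ} (δ ε : ℝ) (H : Matrix (Fin nm) (Fin nm) ℝ)
    (F : Matrix (Fin n) (Fin nm) ℝ) (Y : Matrix (Fin n) (Fin n) ℝ)
    (G : Matrix (Fin q) (Fin nm) ℝ) (E : Matrix (Fin q) (Fin n) ℝ) (d w : Fin q → ℝ)
    (U : Fin nm → ℝ) (x : Fin n → ℝ) : ℝ :=
  (1 / 2) * (U ⬝ᵥ H.mulVec U) + x ⬝ᵥ F.mulVec U + x ⬝ᵥ Y.mulVec x +
    ε * Bxu δ G E d w U x

/-- Euclidean norm of a pair of vectors `(U, x)`. -/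
noncomputable def pairNorm {nm n : ℕ} (U : Fin nm → ℝ) (x : Fin n → ℝ) : ℝ :=
  Real.sqrt ((∑ i, (U i) ^ 2) + ∑ j, (x j) ^ 2)

/-- A class-`K∞` function: continuous, strictly increasing, vanishing at `0`, unbounded. -/
def IsKInfty (α : ℝ → ℝ) : Prop :=
  ContinuousOn α (Set.Ici 0) ∧ StrictMonoOn α (Set.Ici 0) ∧ α 0 = 0 ∧
    Filter.Tendsto α Filter.atTop Filter.atTop

/-!
Write `s = Ex − GU` for the shift of the constraint slacks, so that the `i`-th barrier term is
evaluated at `dⁱ + sⁱ`. Since `B̂''(z) = 1 / max(δ, z)²`, the Bregman remainder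
`ρ_d(t) = B̂(d + t) − B̂(d) − B̂'(d) t` lies between `t² / (2M²)` (while `d + t ≤ M`) and
`t² / (2δ²)`; being convex and vanishing at `0`, it then grows at least like `min(t², |t|)`.
The recentering condition says exactly that the linear terms `(1 + wⁱ) B̂'(dⁱ) sⁱ` sum to zero,
so `B̂_xu = Σ (1 + wⁱ) ρ_{dⁱ}(sⁱ)`. Compactness of `Z` makes the linear map `(U, x) ↦ s`
injective, so `‖s‖` is comparable to `‖(U, x)‖`. With the quadratic part nonnegative and bounded
by a multiple of `‖(U, x)‖²`, this gives `ε c min(κ²r², κr) ≤ Ĵ_N ≤ C r²` for `r = ‖(U, x)‖`.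
-/

open Set

lemma hasDerivAt_ite_lt {g h g' h' : ℝ → ℝ} {a : ℝ}
    (hg : ∀ y ≤ a, HasDerivAt g (g' y) y) (hh : ∀ y, a ≤ y → HasDerivAt h (h' y) y)
    (hval : g a = h a) (hder : g' a = h' a) (z : ℝ) :
    HasDerivAt (fun y => if a < y then h y else g y) (if a < z then h' z else g' z) z := by
  rcases lt_trichotomy z a with hz | rfl | hz
  · rw [if_neg hz.not_gt]
    exact (hg z hz.le).congr_of_eventuallyEq
      (eventually_lt_nhds hz |>.mono fun y hy => if_neg hy.not_gt)
  · rw [if_neg (lt_irrefl z)]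
    have hleft : HasDerivWithinAt (fun y => if z < y then h y else g y) (g' z) (Iic z) z :=
      (hg z le_rfl).hasDerivWithinAt.congr (fun y hy => if_neg (not_lt.2 hy))
        (if_neg (lt_irrefl z))
    have hright : HasDerivWithinAt (fun y => if z < y then h y else g y) (g' z) (Ici z) z := by
      rw [hder]
      exact (hh z le_rfl).hasDerivWithinAt.congr
        (fun y hy => by rcases (mem_Ici.1 hy).lt_or_eq with hy | rfl <;> simp [*]) (by simp [hval])
    simpa using hleft.union hright
  · rw [if_pos hz]
    exact (hh z hz.le).congr_of_eventuallyEq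
      (eventually_gt_nhds hz |>.mono fun y hy => if_pos hy)

lemma ConvexOn.le_of_hasDerivAt_eq_zero {D : Set ℝ} {f : ℝ → ℝ} {x y : ℝ}
    (hf : ConvexOn ℝ D f) (hx : x ∈ D) (hy : y ∈ D) (hfx : HasDerivAt f 0 x) : f x ≤ f y := by
  rcases lt_trichotomy x y with hxy | rfl | hxy
  · have := hf.le_slope_of_hasDerivAt hx hy hxy hfx
    rw [slope_def_field, le_div_iff₀ (sub_pos.2 hxy)] at this
    linarith
  · exact le_rfl
  · have := hf.slope_le_of_hasDerivAt hy hx hxy hfx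
    rw [slope_def_field, div_le_iff₀ (sub_pos.2 hxy)] at this
    linarith

lemma ConvexOn.map_mul_le {f : ℝ → ℝ} (hf : ConvexOn ℝ univ f) (h0 : f 0 = 0) {a : ℝ}
    (ha₀ : 0 ≤ a) (ha₁ : a ≤ 1) (x : ℝ) : f (a * x) ≤ a * f x := by
  simpa [h0] using hf.2 (mem_univ x) (mem_univ 0) ha₀ (sub_nonneg.2 ha₁) (add_sub_cancel a 1)

lemma convexOn_of_hasDerivAt2 {D : Set ℝ} (hD : Convex ℝ D) {f f' f'' : ℝ → ℝ}
    (hf : ∀ x, HasDerivAt f (f' x) x) (hf' : ∀ x, HasDerivAt f' (f'' x) x)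
    (hf'' : ∀ x ∈ D, 0 ≤ f'' x) : ConvexOn ℝ D f := by
  have hd : deriv f = f' := funext fun x => (hf x).deriv
  refine convexOn_of_deriv2_nonneg' hD (fun x _ => (hf x).differentiableAt.differentiableWithinAt)
    (fun x _ => ?_) fun x hx => ?_
  · rw [hd]; exact (hf' x).differentiableAt.differentiableWithinAt
  · simpa [hd, (hf' x).deriv] using hf'' x hx

lemma mul_sq_div_two_le_of_hasDerivAt2 {D : Set ℝ} (hD : Convex ℝ D) (h0 : 0 ∈ D)
    {f f' f'' : ℝ → ℝ} (hf : ∀ x, HasDerivAt f (f' x) x) (hf' : ∀ x, HasDerivAt f' (f'' x) x)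
    (hf0 : f 0 = 0) (hf'0 : f' 0 = 0) {c : ℝ} (hc : ∀ x ∈ D, c ≤ f'' x) {t : ℝ} (ht : t ∈ D) :
    c * t ^ 2 / 2 ≤ f t := by
  have hq : ∀ x, HasDerivAt (fun x => c * x ^ 2 / 2) (c * x) x := fun x =>
    (((hasDerivAt_pow 2 x).const_mul c).div_const 2).congr_deriv (by ring)
  have hconv : ConvexOn ℝ D (fun x => f x - c * x ^ 2 / 2) :=
    convexOn_of_hasDerivAt2 hD (fun x => (hf x).sub (hq x))
      (fun x => (hf' x).sub ((hasDerivAt_id x).const_mul c)) (by simpa using hc)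
  have := hconv.le_of_hasDerivAt_eq_zero h0 ht (by simpa [hf'0] using (hf 0).fun_sub (hq 0))
  simp only [hf0] at this
  linarith

section Barrier

variable {δ : ℝ}

noncomputable def bhatDeriv (δ z : ℝ) : ℝ :=
  if δ < z then -z⁻¹ else (z - 2 * δ) / δ ^ 2

lemma bhat_eq_neg_log (hδ : 0 < δ) {z : ℝ} (hz : δ ≤ z) : Bhat δ z = -Real.log z := by
  rcases hz.lt_or_eq with h | rfl
  · simp [Bhat, h]
  · simp only [Bhat, lt_irrefl, if_false, show (δ - 2 * δ) / δ = -1 by field_simp; ring]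
    norm_num

lemma hasDerivAt_bhat (hδ : 0 < δ) (z : ℝ) : HasDerivAt (Bhat δ) (bhatDeriv δ z) z := by
  refine hasDerivAt_ite_lt (g := fun y => (1 / 2) * (((y - 2 * δ) / δ) ^ 2 - 1) - Real.log δ)
    (h := fun y => -Real.log y) (g' := fun y => (y - 2 * δ) / δ ^ 2) (h' := fun y => -y⁻¹)
    (fun y _ => ?_) (fun y hy => (Real.hasDerivAt_log (by linarith)).neg) ?_ ?_ z
  · refine (((((hasDerivAt_id' y).sub_const (2 * δ)).div_const δ).fun_pow 2 |>.sub_const 1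
      |>.const_mul (1 / 2)).sub_const (Real.log δ)).congr_deriv ?_
    push_cast
    field_simp
  · simp only [show (δ - 2 * δ) / δ = -1 by field_simp; ring]
    norm_num
  · field_simp
    ring

lemma hasDerivAt_bhatDeriv (hδ : 0 < δ) (z : ℝ) :
    HasDerivAt (bhatDeriv δ) ((max δ z ^ 2)⁻¹) z := by
  have h : HasDerivAt (bhatDeriv δ) (if δ < z then (z ^ 2)⁻¹ else (δ ^ 2)⁻¹) z :=
    hasDerivAt_ite_lt (g := fun y => (y - 2 * δ) / δ ^ 2) (h := fun y => -y⁻¹)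
      (g' := fun _ => (δ ^ 2)⁻¹) (h' := fun y => (y ^ 2)⁻¹)
      (fun y _ => ((hasDerivAt_id' y).sub_const (2 * δ)).div_const (δ ^ 2) |>.congr_deriv (by simp))
      (fun y hy => by simpa using (hasDerivAt_inv (by linarith : y ≠ 0)).fun_neg)
      (by field_simp; ring) rfl z
  convert h using 1
  split_ifs with hz
  · rw [max_eq_right hz.le]
  · rw [max_eq_left (not_lt.1 hz)]

noncomputable def bhatBregman (δ d t : ℝ) : ℝ :=
  Bhat δ (d + t) - Bhat δ d - bhatDeriv δ d * t

@[simp]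
lemma bhatBregman_zero (d : ℝ) : bhatBregman δ d 0 = 0 := by
  simp [bhatBregman]

lemma hasDerivAt_bhatBregman (hδ : 0 < δ) (d t : ℝ) :
    HasDerivAt (bhatBregman δ d) (bhatDeriv δ (d + t) - bhatDeriv δ d) t := by
  have h := (((hasDerivAt_bhat hδ (d + t)).comp t ((hasDerivAt_id t).const_add d)).sub_const
    (Bhat δ d)).fun_sub ((hasDerivAt_id t).const_mul (bhatDeriv δ d))
  simp only [Function.comp_def, id, mul_one] at h
  exact h

lemma hasDerivAt_bhatDeriv_sub (hδ : 0 < δ) (d t : ℝ) :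
    HasDerivAt (fun t => bhatDeriv δ (d + t) - bhatDeriv δ d) ((max δ (d + t) ^ 2)⁻¹) t := by
  simpa using ((hasDerivAt_bhatDeriv hδ (d + t)).comp t ((hasDerivAt_id t).const_add d)).sub_const
    (bhatDeriv δ d)

lemma convexOn_bhatBregman (hδ : 0 < δ) (d : ℝ) : ConvexOn ℝ univ (bhatBregman δ d) :=
  convexOn_of_hasDerivAt2 convex_univ (hasDerivAt_bhatBregman hδ d)
    (hasDerivAt_bhatDeriv_sub hδ d) fun _ _ => by positivity

lemma bhatBregman_le (hδ : 0 < δ) (d t : ℝ) : bhatBregman δ d t ≤ (δ ^ 2)⁻¹ * t ^ 2 / 2 := by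
  have h := mul_sq_div_two_le_of_hasDerivAt2 convex_univ (mem_univ 0)
    (fun x => (hasDerivAt_bhatBregman hδ d x).fun_neg)
    (fun x => (hasDerivAt_bhatDeriv_sub hδ d x).fun_neg)
    (by simp) (by simp) (c := -(δ ^ 2)⁻¹) (fun x _ => neg_le_neg <|
      inv_anti₀ (by positivity) (pow_le_pow_left₀ hδ.le (le_max_left _ _) 2)) (mem_univ t)
  linarith

lemma le_bhatBregman (hδ : 0 < δ) {d t M : ℝ} (hδM : δ ≤ M) (hdM : d ≤ M) (ht : d + t ≤ M) :
    (M ^ 2)⁻¹ * t ^ 2 / 2 ≤ bhatBregman δ d t :=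
  mul_sq_div_two_le_of_hasDerivAt2 (convex_Iic (M - d)) (by simpa using hdM)
    (hasDerivAt_bhatBregman hδ d) (hasDerivAt_bhatDeriv_sub hδ d) (by simp) (by simp)
    (fun x hx => inv_anti₀ (by positivity) (pow_le_pow_left₀ (hδ.le.trans (le_max_left _ _))
      (max_le hδM (by linarith [mem_Iic.1 hx])) 2)) (by simpa using by linarith)

lemma min_sq_abs_le_bhatBregman (hδ : 0 < δ) {d M : ℝ} (hδM : δ ≤ M) (hdM : d + 1 ≤ M)
    (t : ℝ) : (M ^ 2)⁻¹ * min (t ^ 2) |t| / 2 ≤ bhatBregman δ d t := by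
  rcases le_or_gt |t| 1 with ht | ht
  · calc (M ^ 2)⁻¹ * min (t ^ 2) |t| / 2 ≤ (M ^ 2)⁻¹ * t ^ 2 / 2 := by
          gcongr; exact min_le_left _ _
      _ ≤ bhatBregman δ d t :=
          le_bhatBregman hδ hδM (by linarith) (by linarith [le_abs_self t])
  · -- by convexity, the bound at the unit point `t / |t|` scales linearly in `|t|`
    have habs : 0 < |t| := by linarith
    have hunit : (|t|⁻¹ * t) ^ 2 = 1 := by
      rw [mul_pow, ← sq_abs t]; field_simp
    have hle : |t|⁻¹ * t ≤ 1 := by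
      rw [inv_mul_le_iff₀ habs, mul_one]; exact le_abs_self t
    have h1 := le_bhatBregman hδ hδM (by linarith) (by linarith : d + |t|⁻¹ * t ≤ M)
    have h2 := (convexOn_bhatBregman hδ d).map_mul_le (bhatBregman_zero d)
      (inv_nonneg.2 habs.le) (inv_le_one_of_one_le₀ ht.le) t
    rw [hunit] at h1
    calc (M ^ 2)⁻¹ * min (t ^ 2) |t| / 2 ≤ |t| * ((M ^ 2)⁻¹ * 1 / 2) := by
          have := min_le_right (t ^ 2) |t|
          have : 0 ≤ (M ^ 2)⁻¹ := by positivity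
          nlinarith
      _ ≤ |t| * (|t|⁻¹ * bhatBregman δ d t) := by gcongr; linarith
      _ = bhatBregman δ d t := by field_simp

end Barrier

section KInfty

variable {α β : ℝ → ℝ}

lemma isKInfty_id : IsKInfty fun r => r :=
  ⟨continuousOn_id, fun _ _ _ _ h => h, rfl, Filter.tendsto_id⟩

lemma isKInfty_sq : IsKInfty fun r => r ^ 2 :=
  ⟨(continuous_pow 2).continuousOn, fun _ ha _ _ h => pow_lt_pow_left₀ h ha two_ne_zero,
    zero_pow two_ne_zero, Filter.tendsto_pow_atTop two_ne_zero⟩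

lemma IsKInfty.const_mul (hα : IsKInfty α) {c : ℝ} (hc : 0 < c) : IsKInfty fun r => c * α r :=
  ⟨continuousOn_const.mul hα.1, fun _ ha _ hb h => mul_lt_mul_of_pos_left (hα.2.1 ha hb h) hc,
    by simp [hα.2.2.1], hα.2.2.2.const_mul_atTop hc⟩

lemma IsKInfty.comp_const_mul (hα : IsKInfty α) {κ : ℝ} (hκ : 0 < κ) :
    IsKInfty fun r => α (κ * r) := by
  have hmaps : MapsTo (κ * ·) (Ici 0) (Ici 0) := fun r hr => mul_nonneg hκ.le hr
  exact ⟨hα.1.comp (continuousOn_const.mul continuousOn_id) hmaps,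
    fun _ ha _ hb h => hα.2.1 (hmaps ha) (hmaps hb) (mul_lt_mul_of_pos_left h hκ),
    by simp [hα.2.2.1], hα.2.2.2.comp (Filter.tendsto_id.const_mul_atTop hκ)⟩

lemma IsKInfty.min (hα : IsKInfty α) (hβ : IsKInfty β) :
    IsKInfty fun r => min (α r) (β r) :=
  ⟨ContinuousOn.inf hα.1 hβ.1, fun _ ha _ hb h => min_lt_min (hα.2.1 ha hb h) (hβ.2.1 ha hb h),
    by simp [hα.2.2.1, hβ.2.2.1], Filter.tendsto_inf_atTop _ hα.2.2.2 hβ.2.2.2⟩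

end KInfty

lemma min_sq_norm_le_sum {ι : Type*} [Fintype ι] (s : ι → ℝ) :
    min (‖s‖ ^ 2) ‖s‖ ≤ ∑ i, min (s i ^ 2) |s i| := by
  have hnonneg : ∀ i, 0 ≤ min (s i ^ 2) |s i| := fun i => le_min (sq_nonneg _) (abs_nonneg _)
  cases isEmpty_or_nonempty ι
  · simp [Subsingleton.elim s 0]
  obtain ⟨i, -, hi⟩ := Finset.exists_mem_eq_sup Finset.univ Finset.univ_nonempty (‖s ·‖₊)
  have hnorm : ‖s‖ = |s i| := by
    rw [← Real.norm_eq_abs, ← coe_nnnorm, Pi.nnnorm_def, hi, coe_nnnorm]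
  rw [hnorm, sq_abs]
  exact Finset.single_le_sum (fun j _ => hnonneg j) (Finset.mem_univ i)

lemma dotProduct_mulVec_le {m k : Type*} [Fintype m] [Fintype k] (A : Matrix m k ℝ)
    {u : m → ℝ} {v : k → ℝ} {r : ℝ} (hu : ∀ i, |u i| ≤ r) (hv : ∀ j, |v j| ≤ r) :
    u ⬝ᵥ A *ᵥ v ≤ (∑ i, ∑ j, |A i j|) * r ^ 2 := by
  simp only [dotProduct, Matrix.mulVec, Finset.mul_sum, Finset.sum_mul]
  refine Finset.sum_le_sum fun i _ => Finset.sum_le_sum fun j _ => ?_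
  have hr : 0 ≤ r := (abs_nonneg _).trans (hu i)
  calc u i * (A i j * v j) ≤ |u i| * (|A i j| * |v j|) := by
        rw [← abs_mul, ← abs_mul]; exact le_abs_self _
    _ ≤ r * (|A i j| * r) := by gcongr <;> simp [hu, hv]
    _ = |A i j| * r ^ 2 := by ring

section SlackShift

variable {nm n q : ℕ} (G : Matrix (Fin q) (Fin nm) ℝ) (E : Matrix (Fin q) (Fin n) ℝ)

def slackShift (U : Fin nm → ℝ) (x : Fin n → ℝ) : Fin q → ℝ := E *ᵥ x - G *ᵥ U

lemma slackShift_smul (t : ℝ) (U : Fin nm → ℝ) (x : Fin n → ℝ) :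
    slackShift G E (t • U) (t • x) = t • slackShift G E U x := by
  simp [slackShift, Matrix.mulVec_smul, smul_sub]

lemma pairNorm_eq_norm (U : Fin nm → ℝ) (x : Fin n → ℝ) :
    pairNorm U x = ‖(WithLp.toLp 2 (Sum.elim U x) : EuclideanSpace ℝ (Fin nm ⊕ Fin n))‖ := by
  simp [pairNorm, EuclideanSpace.norm_eq, Fintype.sum_sum_type]

lemma abs_le_pairNorm_left (U : Fin nm → ℝ) (x : Fin n → ℝ) (i : Fin nm) :
    |U i| ≤ pairNorm U x := by
  simpa [pairNorm_eq_norm] using PiLp.norm_apply_le (WithLp.toLp 2 (Sum.elim U x)) (Sum.inl i)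

lemma abs_le_pairNorm_right (U : Fin nm → ℝ) (x : Fin n → ℝ) (j : Fin n) :
    |x j| ≤ pairNorm U x := by
  simpa [pairNorm_eq_norm] using PiLp.norm_apply_le (WithLp.toLp 2 (Sum.elim U x)) (Sum.inr j)

noncomputable def slackShiftLinear :
    EuclideanSpace ℝ (Fin nm ⊕ Fin n) →ₗ[ℝ] (Fin q → ℝ) :=
  (Matrix.fromCols (-G) E).mulVecLin ∘ₗ (WithLp.linearEquiv 2 ℝ _).toLinearMap

lemma slackShiftLinear_toLp (U : Fin nm → ℝ) (x : Fin n → ℝ) :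
    slackShiftLinear G E (WithLp.toLp 2 (Sum.elim U x)) = slackShift G E U x := by
  simp [slackShiftLinear, slackShift, Matrix.neg_mulVec]
  abel

lemma exists_norm_slackShift_le :
    ∃ C, ∀ U x, ‖slackShift G E U x‖ ≤ C * pairNorm U x := by
  refine ⟨‖LinearMap.toContinuousLinearMap (slackShiftLinear G E)‖, fun U x => ?_⟩
  simpa [pairNorm_eq_norm, slackShiftLinear_toLp] using
    (LinearMap.toContinuousLinearMap (slackShiftLinear G E)).le_opNorm
      (WithLp.toLp 2 (Sum.elim U x))

lemma exists_pos_mul_pairNorm_le_norm_slackShift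
    (hinj : ∀ U x, slackShift G E U x = 0 → U = 0 ∧ x = 0) :
    ∃ κ > 0, ∀ U x, κ * pairNorm U x ≤ ‖slackShift G E U x‖ := by
  have hker : LinearMap.ker (slackShiftLinear G E) = ⊥ := by
    refine LinearMap.ker_eq_bot'.2 fun v hv => ?_
    obtain ⟨U, x, rfl⟩ : ∃ U x, v = WithLp.toLp 2 (Sum.elim U x) :=
      ⟨_, _, by ext (i | j) <;> rfl⟩
    rw [slackShiftLinear_toLp] at hv
    obtain ⟨rfl, rfl⟩ := hinj U x hv
    ext (i | j) <;> rfl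
  obtain ⟨K, hK, hanti⟩ := (slackShiftLinear G E).exists_antilipschitzWith hker
  refine ⟨(K : ℝ)⁻¹, by positivity, fun U x => ?_⟩
  have := ZeroHomClass.bound_of_antilipschitz _ hanti (WithLp.toLp 2 (Sum.elim U x))
  rw [slackShiftLinear_toLp, ← pairNorm_eq_norm] at this
  rw [inv_mul_le_iff₀ (by positivity)]
  exact this

end SlackShift

section RecenteredBarrier

variable {nm n q : ℕ} {δ : ℝ} {G : Matrix (Fin q) (Fin nm) ℝ} {E : Matrix (Fin q) (Fin n) ℝ}
  {d w : Fin q → ℝ}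

lemma bxu_eq_sum_bhatBregman (hδ : 0 < δ) (hδd : ∀ i, δ ≤ d i) (U : Fin nm → ℝ)
    (x : Fin n → ℝ) :
    Bxu δ G E d w U x = ∑ i, (1 + w i) * bhatBregman δ (d i) (slackShift G E U x i) +
      ∑ i, (1 + w i) * bhatDeriv δ (d i) * slackShift G E U x i := by
  rw [← Finset.sum_add_distrib]
  refine Finset.sum_congr rfl fun i _ => ?_
  simp only [bhatBregman, bhat_eq_neg_log hδ (hδd i), slackShift, Pi.sub_apply]
  ring_nf

lemma sum_bhatDeriv_mul_slackShift_eq_zero (hδ : 0 < δ) (hδd : ∀ i, δ ≤ d i)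
    (hrecenter : fderiv ℝ
      (fun p : (Fin nm → ℝ) × (Fin n → ℝ) => Bxu δ G E d w p.1 p.2) (0, 0) = 0)
    (U : Fin nm → ℝ) (x : Fin n → ℝ) :
    ∑ i, (1 + w i) * bhatDeriv δ (d i) * slackShift G E U x i = 0 := by
  set L := ∑ i, (1 + w i) * bhatDeriv δ (d i) * slackShift G E U x i
  have hdiff : Differentiable ℝ
      (fun p : (Fin nm → ℝ) × (Fin n → ℝ) => Bxu δ G E d w p.1 p.2) := by
    have : Differentiable ℝ (Bhat δ) := fun z => (hasDerivAt_bhat hδ z).differentiableAt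
    unfold Bxu
    simp only [Matrix.mulVec, dotProduct]
    fun_prop
  have hzero : HasDerivAt (fun t : ℝ => Bxu δ G E d w (t • U) (t • x)) 0 0 := by
    have hB : HasFDerivAt (fun p : (Fin nm → ℝ) × (Fin n → ℝ) => Bxu δ G E d w p.1 p.2)
        (0 : (Fin nm → ℝ) × (Fin n → ℝ) →L[ℝ] ℝ)
        ((0 : ℝ) • (U, x)) := by
      rw [zero_smul, ← hrecenter]
      exact (hdiff _).hasFDerivAt
    exact hB.comp_hasDerivAt (0 : ℝ) ((hasDerivAt_id (0 : ℝ)).smul_const (U, x))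
  have hL : HasDerivAt (fun t : ℝ => Bxu δ G E d w (t • U) (t • x)) L 0 := by
    have hray : (fun t : ℝ => Bxu δ G E d w (t • U) (t • x)) = fun t =>
        ∑ i, (1 + w i) * bhatBregman δ (d i) (t * slackShift G E U x i) + t * L := by
      funext t
      simp only [bxu_eq_sum_bhatBregman hδ hδd, slackShift_smul, Pi.smul_apply, smul_eq_mul, L,
        Finset.mul_sum]
      congr 1
      exact Finset.sum_congr rfl fun i _ => by ring
    rw [hray]
    refine ((HasDerivAt.fun_sum fun i _ => (((hasDerivAt_bhatBregman hδ (d i) _).comp (0 : ℝ)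
      ((hasDerivAt_id (0 : ℝ)).mul_const (slackShift G E U x i))).const_mul (1 + w i))).add
      ((hasDerivAt_id (0 : ℝ)).mul_const L)).congr_deriv ?_
    simp
  exact hL.unique hzero

lemma bxu_le {U : Fin nm → ℝ} {x : Fin n → ℝ} (hδ : 0 < δ) (hδd : ∀ i, δ ≤ d i)
    (hw : ∀ i, 0 ≤ w i) (hlin : ∑ i, (1 + w i) * bhatDeriv δ (d i) * slackShift G E U x i = 0) :
    Bxu δ G E d w U x ≤ (∑ i, (1 + w i)) * (δ ^ 2)⁻¹ * ‖slackShift G E U x‖ ^ 2 / 2 := by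
  rw [bxu_eq_sum_bhatBregman hδ hδd, hlin, add_zero, Finset.sum_mul, Finset.sum_mul,
    Finset.sum_div]
  refine Finset.sum_le_sum fun i _ => ?_
  have hs : slackShift G E U x i ^ 2 ≤ ‖slackShift G E U x‖ ^ 2 := by
    rw [← sq_abs, ← Real.norm_eq_abs]
    exact pow_le_pow_left₀ (norm_nonneg _) (norm_le_pi_norm _ i) 2
  calc (1 + w i) * bhatBregman δ (d i) (slackShift G E U x i)
      ≤ (1 + w i) * ((δ ^ 2)⁻¹ * ‖slackShift G E U x‖ ^ 2 / 2) := by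
        gcongr
        · linarith [hw i]
        · exact (bhatBregman_le hδ _ _).trans (by gcongr)
    _ = _ := by ring

lemma le_bxu {U : Fin nm → ℝ} {x : Fin n → ℝ} (hδ : 0 < δ) (hδd : ∀ i, δ ≤ d i)
    (hw : ∀ i, 0 ≤ w i) (hlin : ∑ i, (1 + w i) * bhatDeriv δ (d i) * slackShift G E U x i = 0)
    {M : ℝ} (hδM : δ ≤ M) (hdM : ∀ i, d i + 1 ≤ M) :
    (M ^ 2)⁻¹ * min (‖slackShift G E U x‖ ^ 2) ‖slackShift G E U x‖ / 2 ≤ Bxu δ G E d w U x := by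
  rw [bxu_eq_sum_bhatBregman hδ hδd, hlin, add_zero]
  calc (M ^ 2)⁻¹ * min (‖slackShift G E U x‖ ^ 2) ‖slackShift G E U x‖ / 2
      ≤ ∑ i, (M ^ 2)⁻¹ * min (slackShift G E U x i ^ 2) |slackShift G E U x i| / 2 := by
        rw [← Finset.sum_div, ← Finset.mul_sum]
        gcongr
        exact min_sq_norm_le_sum _
    _ ≤ ∑ i, (1 + w i) * bhatBregman δ (d i) (slackShift G E U x i) := by
        refine Finset.sum_le_sum fun i _ => ?_
        have h := min_sq_abs_le_bhatBregman hδ hδM (hdM i) (slackShift G E U x i)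
        have h0 : 0 ≤ (M ^ 2)⁻¹ * min (slackShift G E U x i ^ 2) |slackShift G E U x i| / 2 := by
          have := le_min (sq_nonneg (slackShift G E U x i)) (abs_nonneg (slackShift G E U x i))
          positivity
        exact h.trans (le_mul_of_one_le_left (h0.trans h) (by linarith [hw i]))

lemma exists_isKInfty_le_bxu (hδ : 0 < δ) (hδd : ∀ i, δ ≤ d i) (hw : ∀ i, 0 ≤ w i)
    (hlin : ∀ U x, ∑ i, (1 + w i) * bhatDeriv δ (d i) * slackShift G E U x i = 0)
    (hinj : ∀ U x, slackShift G E U x = 0 → U = 0 ∧ x = 0) :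
    ∃ α, IsKInfty α ∧ ∀ U x, α (pairNorm U x) ≤ Bxu δ G E d w U x := by
  obtain ⟨κ, hκ, hκs⟩ := exists_pos_mul_pairNorm_le_norm_slackShift G E hinj
  have hd : ∀ i, 0 ≤ d i := fun i => hδ.le.trans (hδd i)
  set M := δ + ∑ i, d i + 1
  have hδM : δ ≤ M := by linarith [Finset.sum_nonneg fun i (_ : i ∈ Finset.univ) => hd i]
  have hdM : ∀ i, d i + 1 ≤ M := fun i => by
    linarith [Finset.single_le_sum (fun j _ => hd j) (Finset.mem_univ i)]
  have hM : 0 < M := hδ.trans_le hδM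
  refine ⟨fun r => (M ^ 2)⁻¹ / 2 * min ((κ * r) ^ 2) (κ * r),
    ((isKInfty_sq.min isKInfty_id).comp_const_mul hκ).const_mul (by positivity), fun U x => ?_⟩
  have hr : 0 ≤ κ * pairNorm U x := mul_nonneg hκ.le (Real.sqrt_nonneg _)
  have := le_bxu hδ hδd hw (hlin U x) hδM hdM
  calc (M ^ 2)⁻¹ / 2 * min ((κ * pairNorm U x) ^ 2) (κ * pairNorm U x)
      ≤ (M ^ 2)⁻¹ / 2 * min (‖slackShift G E U x‖ ^ 2) ‖slackShift G E U x‖ := by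
        gcongr <;> exact hκs U x
    _ ≤ Bxu δ G E d w U x := by linarith

lemma exists_bxu_le_mul_sq (hδ : 0 < δ) (hδd : ∀ i, δ ≤ d i) (hw : ∀ i, 0 ≤ w i)
    (hlin : ∀ U x, ∑ i, (1 + w i) * bhatDeriv δ (d i) * slackShift G E U x i = 0) :
    ∃ A, 0 ≤ A ∧ ∀ U x, Bxu δ G E d w U x ≤ A * pairNorm U x ^ 2 := by
  obtain ⟨C, hC⟩ := exists_norm_slackShift_le G E
  have hW : 0 ≤ ∑ i, (1 + w i) := Finset.sum_nonneg fun i _ => add_nonneg zero_le_one (hw i)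
  refine ⟨(∑ i, (1 + w i)) * (δ ^ 2)⁻¹ * C ^ 2 / 2, by positivity, fun U x => ?_⟩
  have hs : ‖slackShift G E U x‖ ^ 2 ≤ C ^ 2 * pairNorm U x ^ 2 := by
    rw [← mul_pow]
    exact pow_le_pow_left₀ (norm_nonneg _) (hC U x) 2
  calc Bxu δ G E d w U x
      ≤ (∑ i, (1 + w i)) * (δ ^ 2)⁻¹ * ‖slackShift G E U x‖ ^ 2 / 2 := bxu_le hδ hδd hw (hlin U x)
    _ ≤ (∑ i, (1 + w i)) * (δ ^ 2)⁻¹ * (C ^ 2 * pairNorm U x ^ 2) / 2 := by gcongr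
    _ = _ := by ring

end RecenteredBarrier

lemma quadratic_le_mul_pairNorm_sq {nm n : ℕ} (H : Matrix (Fin nm) (Fin nm) ℝ)
    (F : Matrix (Fin n) (Fin nm) ℝ) (Y : Matrix (Fin n) (Fin n) ℝ) (U : Fin nm → ℝ)
    (x : Fin n → ℝ) :
    (1 / 2) * (U ⬝ᵥ H *ᵥ U) + x ⬝ᵥ F *ᵥ U + x ⬝ᵥ Y *ᵥ x ≤
      ((1 / 2) * ∑ i, ∑ j, |H i j| + ∑ i, ∑ j, |F i j| + ∑ i, ∑ j, |Y i j|) *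
        pairNorm U x ^ 2 := by
  have hU := abs_le_pairNorm_left U x
  have hx := abs_le_pairNorm_right U x
  have := dotProduct_mulVec_le H hU hU
  have := dotProduct_mulVec_le F hx hU
  have := dotProduct_mulVec_le Y hx hx
  linarith

theorem cost_KInfty_bounds_general
    {nm n q : ℕ} (δ ε : ℝ) (H : Matrix (Fin nm) (Fin nm) ℝ)
    (F : Matrix (Fin n) (Fin nm) ℝ) (Y : Matrix (Fin n) (Fin n) ℝ)
    (G : Matrix (Fin q) (Fin nm) ℝ) (E : Matrix (Fin q) (Fin n) ℝ) (d w : Fin q → ℝ)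
    (hδ : 0 < δ) (hε : 0 < ε)
    (hδd : ∀ i, δ ≤ d i) (hw : ∀ i, 0 ≤ w i)
    (hquad : ∀ (U : Fin nm → ℝ) (x : Fin n → ℝ),
      0 ≤ (1 / 2) * (U ⬝ᵥ H.mulVec U) + x ⬝ᵥ F.mulVec U + x ⬝ᵥ Y.mulVec x)
    (hcompact : ∀ (U : Fin nm → ℝ) (x : Fin n → ℝ),
      G.mulVec U - E.mulVec x ≤ 0 → U = 0 ∧ x = 0)
    (hrecenter : fderiv ℝ
      (fun p : (Fin nm → ℝ) × (Fin n → ℝ) => Bxu δ G E d w p.1 p.2) (0, 0) = 0) :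
    ∃ αlow αup : ℝ → ℝ, IsKInfty αlow ∧ IsKInfty αup ∧
      ∀ (U : Fin nm → ℝ) (x : Fin n → ℝ),
        αlow (pairNorm U x) ≤ Jcost δ ε H F Y G E d w U x ∧
        Jcost δ ε H F Y G E d w U x ≤ αup (pairNorm U x) := by
  have hlin := sum_bhatDeriv_mul_slackShift_eq_zero hδ hδd hrecenter
  obtain ⟨α, hα, hαB⟩ := exists_isKInfty_le_bxu hδ hδd hw hlin fun U x hs =>
    hcompact U x (by rw [slackShift, sub_eq_zero] at hs; rw [hs, sub_self])
  obtain ⟨A, hA, hBA⟩ := exists_bxu_le_mul_sq hδ hδd hw hlin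
  set Aq := (1 / 2) * ∑ i, ∑ j, |H i j| + ∑ i, ∑ j, |F i j| + ∑ i, ∑ j, |Y i j|
  refine ⟨fun r => ε * α r, fun r => (Aq + ε * A + 1) * r ^ 2, hα.const_mul hε,
    isKInfty_sq.const_mul (by positivity), fun U x => ⟨?_, ?_⟩⟩
  · calc ε * α (pairNorm U x) ≤ ε * Bxu δ G E d w U x := by gcongr; exact hαB U x
      _ ≤ Jcost δ ε H F Y G E d w U x := by unfold Jcost; linarith [hquad U x]
  · calc Jcost δ ε H F Y G E d w U x ≤ Aq * pairNorm U x ^ 2 + ε * (A * pairNorm U x ^ 2) := by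
          unfold Jcost
          gcongr
          exacts [quadratic_le_mul_pairNorm_sq H F Y U x, hBA U x]
      _ ≤ (Aq + ε * A + 1) * pairNorm U x ^ 2 := by linarith [sq_nonneg (pairNorm U x)]

/-- (Lemma 1, part i) If the quadratic part of the cost is positive semidefinite, `ε > 0`,
the combined constraint polytope `Z = {(U,x) : GU − Ex ≤ d}` is compact, `0 < δ ≤ min_i dⁱ`,
the weights are nonnegative and chosen so that the gradient of `B̂_xu` vanishes at the
origin, then the cost `Ĵ_N` is sandwiched between two class-`K∞` functions of `‖(U,x)‖`. -/
theorem cost_KInfty_bounds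
    {nm n q : ℕ} (δ ε : ℝ) (H : Matrix (Fin nm) (Fin nm) ℝ)
    (F : Matrix (Fin n) (Fin nm) ℝ) (Y : Matrix (Fin n) (Fin n) ℝ)
    (G : Matrix (Fin q) (Fin nm) ℝ) (E : Matrix (Fin q) (Fin n) ℝ) (d w : Fin q → ℝ)
    (hδ : 0 < δ) (hε : 0 < ε)
    (hd : ∀ i, 0 < d i) (hδd : ∀ i, δ ≤ d i) (hw : ∀ i, 0 ≤ w i)
    (hquad : ∀ (U : Fin nm → ℝ) (x : Fin n → ℝ),
      0 ≤ (1 / 2) * (U ⬝ᵥ H.mulVec U) + x ⬝ᵥ F.mulVec U + x ⬝ᵥ Y.mulVec x)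
    (hcompact : ∀ (U : Fin nm → ℝ) (x : Fin n → ℝ),
      G.mulVec U - E.mulVec x ≤ 0 → U = 0 ∧ x = 0)
    (hrecenter : fderiv ℝ
      (fun p : (Fin nm → ℝ) × (Fin n → ℝ) => Bxu δ G E d w p.1 p.2) (0, 0) = 0) :
    ∃ αlow αup : ℝ → ℝ, IsKInfty αlow ∧ IsKInfty αup ∧
      ∀ (U : Fin nm → ℝ) (x : Fin n → ℝ),
        αlow (pairNorm U x) ≤ Jcost δ ε H F Y G E d w U x ∧
        Jcost δ ε H F Y G E d w U x ≤ αup (pairNorm U x) :=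
  cost_KInfty_bounds_general δ ε H F Y G E d w hδ hε hδd hw hquad hcompact hrecenter
end

section
/- Let Q ∈ ℝ^{n×n} be symmetric positive semidefinite, R ∈ ℝ^{m×m} symmetric positive definite, M_x ∈ ℝ^{n×n} and M_u ∈ ℝ^{m×m} symmetric positive semidefinite, ε > 0, and suppose K ∈ ℝ^{m×n} and symmetric P ∈ ℝ^{n×n} satisfy the Riccati-type equation P = (A+BK)ᵀP(A+BK) + Kᵀ(R+εM_u)K + Q + εM_x. If the barrier functions satisfy the quadratic bounds B̂_x(x) ≤ xᵀM_x x for all x ∈ ℝⁿ and B̂_u(u) ≤ uᵀM_u u for all u ∈ ℝᵐ, then for all x ∈ ℝⁿ: ((A+BK)x)ᵀP((A+BK)x) − xᵀPx ≤ −(xᵀQx + (Kx)ᵀR(Kx) + ε·B̂_x(x) + ε·B̂_u(Kx)). -/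
open Matrix

theorem dotProduct_transpose_mul_mul_mulVec {α ι κ : Type*} [CommSemiring α] [Fintype ι]
    [Fintype κ] (N : Matrix ι κ α) (M : Matrix ι ι α) (x : κ → α) :
    x ⬝ᵥ (Nᵀ * M * N) *ᵥ x = (N *ᵥ x) ⬝ᵥ M *ᵥ (N *ᵥ x) := by
  rw [dotProduct_mulVec, dotProduct_mulVec, ← vecMul_vecMul, ← vecMul_vecMul,
    vecMul_transpose, ← dotProduct_mulVec]

theorem terminal_cost_decrease_general
    {n m : ℕ}
    (A : Matrix (Fin n) (Fin n) ℝ) (B : Matrix (Fin n) (Fin m) ℝ)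
    (Q : Matrix (Fin n) (Fin n) ℝ) (R : Matrix (Fin m) (Fin m) ℝ)
    (Mx : Matrix (Fin n) (Fin n) ℝ) (Mu : Matrix (Fin m) (Fin m) ℝ)
    (K : Matrix (Fin m) (Fin n) ℝ) (P : Matrix (Fin n) (Fin n) ℝ)
    (ε : ℝ) (hε : 0 < ε)
    (Bx : (Fin n → ℝ) → ℝ) (Bu : (Fin m → ℝ) → ℝ)
    (hRiccati : P = (A + B * K)ᵀ * P * (A + B * K) + Kᵀ * (R + ε • Mu) * K + Q + ε • Mx)
    (hBx : ∀ x : Fin n → ℝ, Bx x ≤ x ⬝ᵥ Mx.mulVec x)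
    (hBu : ∀ u : Fin m → ℝ, Bu u ≤ u ⬝ᵥ Mu.mulVec u) :
    ∀ x : Fin n → ℝ,
      ((A + B * K).mulVec x) ⬝ᵥ P.mulVec ((A + B * K).mulVec x) - x ⬝ᵥ P.mulVec x ≤
        -(x ⬝ᵥ Q.mulVec x + (K.mulVec x) ⬝ᵥ R.mulVec (K.mulVec x) +
          ε * Bx x + ε * Bu (K.mulVec x)) := by
  intro x
  have hP : x ⬝ᵥ P *ᵥ x =
      ((A + B * K) *ᵥ x) ⬝ᵥ P *ᵥ ((A + B * K) *ᵥ x) +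
        ((K *ᵥ x) ⬝ᵥ R *ᵥ (K *ᵥ x) + ε * ((K *ᵥ x) ⬝ᵥ Mu *ᵥ (K *ᵥ x))) +
        x ⬝ᵥ Q *ᵥ x + ε * (x ⬝ᵥ Mx *ᵥ x) := by
    conv_lhs => rw [hRiccati]
    simp only [add_mulVec, dotProduct_add, dotProduct_transpose_mul_mul_mulVec, smul_mulVec,
      mulVec_add, dotProduct_smul, smul_eq_mul]
  have hBx' := mul_le_mul_of_nonneg_left (hBx x) hε.le
  have hBu' := mul_le_mul_of_nonneg_left (hBu (K *ᵥ x)) hε.le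
  linarith

/-- If `K` and symmetric `P` satisfy the Riccati-type equation
`P = (A+BK)ᵀP(A+BK) + Kᵀ(R+εM_u)K + Q + εM_x`, and the barrier functions obey the
quadratic bounds `B̂_x(x) ≤ xᵀM_x x` and `B̂_u(u) ≤ uᵀM_u u`, then the terminal cost
`F̂(x) = xᵀPx` decreases along the local feedback `u = Kx` by at least the stage cost
`ℓ̂(x,Kx)`. -/
theorem terminal_cost_decrease
    {n m : ℕ}
    (A : Matrix (Fin n) (Fin n) ℝ) (B : Matrix (Fin n) (Fin m) ℝ)
    (Q : Matrix (Fin n) (Fin n) ℝ) (R : Matrix (Fin m) (Fin m) ℝ)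
    (Mx : Matrix (Fin n) (Fin n) ℝ) (Mu : Matrix (Fin m) (Fin m) ℝ)
    (K : Matrix (Fin m) (Fin n) ℝ) (P : Matrix (Fin n) (Fin n) ℝ)
    (ε : ℝ) (hε : 0 < ε)
    (Bx : (Fin n → ℝ) → ℝ) (Bu : (Fin m → ℝ) → ℝ)
    (hQsymm : Q.IsSymm) (hQpsd : ∀ x : Fin n → ℝ, 0 ≤ x ⬝ᵥ Q.mulVec x)
    (hRsymm : R.IsSymm) (hRpd : ∀ u : Fin m → ℝ, u ≠ 0 → 0 < u ⬝ᵥ R.mulVec u)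
    (hMxsymm : Mx.IsSymm) (hMxpsd : ∀ x : Fin n → ℝ, 0 ≤ x ⬝ᵥ Mx.mulVec x)
    (hMusymm : Mu.IsSymm) (hMupsd : ∀ u : Fin m → ℝ, 0 ≤ u ⬝ᵥ Mu.mulVec u)
    (hPsymm : P.IsSymm)
    (hRiccati : P = (A + B * K)ᵀ * P * (A + B * K) + Kᵀ * (R + ε • Mu) * K + Q + ε • Mx)
    (hBx : ∀ x : Fin n → ℝ, Bx x ≤ x ⬝ᵥ Mx.mulVec x)
    (hBu : ∀ u : Fin m → ℝ, Bu u ≤ u ⬝ᵥ Mu.mulVec u) :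
    ∀ x : Fin n → ℝ,
      ((A + B * K).mulVec x) ⬝ᵥ P.mulVec ((A + B * K).mulVec x) - x ⬝ᵥ P.mulVec x ≤
        -(x ⬝ᵥ Q.mulVec x + (K.mulVec x) ⬝ᵥ R.mulVec (K.mulVec x) +
          ε * Bx x + ε * Bu (K.mulVec x)) :=
  terminal_cost_decrease_general A B Q R Mx Mu K P ε hε Bx Bu hRiccati hBx hBu
end

section
/- (Lemma 1, part iii) Suppose K ∈ ℝ^{m×n} and the symmetric positive definite P satisfy P = (A+BK)ᵀP(A+BK) + Kᵀ(R+εM_u)K + Q + εM_x for symmetric positive semidefinite M_x, M_u with B̂_x(x) ≤ xᵀM_x x for all x and B̂_u(u) ≤ uᵀM_u u for all u. Define k_f(U,x) := K·x_N(U,x). Then k_f(0,0) = 0, and for every (U,x) ∈ ℝ^{Nm}×ℝⁿ with U = (u₀,…,u_{N−1}), successor state x⁺ := Ax + Bu₀, and shifted sequence U⁺ := (u₁,…,u_{N−1}, k_f(U,x)), one has Ĵ_N(U⁺, x⁺) − Ĵ_N(U,x) ≤ −ℓ̂(x, u₀). -/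
/-!
Shifting the input sequence drops the first stage `ℓ̂(x, u₀)` and appends one stage at
`z = x_N(U,x)` driven by the feedback `K z`, whose terminal penalty is then taken at `(A + BK) z`.
Expanding `zᵀPz` with the Riccati equation and bounding the barriers by their quadratic majorants
shows that this appended stage plus the new terminal penalty is at most the old one `zᵀPz`.
-/

open Matrix

/-- Predicted states: `x₀(U,x) = x`, `x_{k+1}(U,x) = A x_k(U,x) + B u_k`. -/
noncomputable def predState {n m N : ℕ} (A : Matrix (Fin n) (Fin n) ℝ)
    (B : Matrix (Fin n) (Fin m) ℝ) (u : Fin N → Fin m → ℝ) (x : Fin n → ℝ) :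
    ℕ → Fin n → ℝ
  | 0 => x
  | k + 1 => A.mulVec (predState A B u x k) +
      (if h : k < N then B.mulVec (u ⟨k, h⟩) else 0)

/-- The relaxed stage cost `ℓ̂(x,u) = xᵀQx + uᵀRu + ε B̂_x(x) + ε B̂_u(u)`. -/
noncomputable def stageCost {n m : ℕ} (Q : Matrix (Fin n) (Fin n) ℝ)
    (R : Matrix (Fin m) (Fin m) ℝ) (ε : ℝ)
    (Bx : (Fin n → ℝ) → ℝ) (Bu : (Fin m → ℝ) → ℝ)
    (x : Fin n → ℝ) (u : Fin m → ℝ) : ℝ :=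
  x ⬝ᵥ Q.mulVec x + u ⬝ᵥ R.mulVec u + ε * Bx x + ε * Bu u

/-- The relaxed barrier function based MPC cost
`Ĵ_N(U,x) = Σ_{k<N} ℓ̂(x_k(U,x),u_k) + x_N(U,x)ᵀ P x_N(U,x)`. -/
noncomputable def mpcCost {n m N : ℕ} (A : Matrix (Fin n) (Fin n) ℝ)
    (B : Matrix (Fin n) (Fin m) ℝ) (Q : Matrix (Fin n) (Fin n) ℝ)
    (R : Matrix (Fin m) (Fin m) ℝ) (P : Matrix (Fin n) (Fin n) ℝ) (ε : ℝ)
    (Bx : (Fin n → ℝ) → ℝ) (Bu : (Fin m → ℝ) → ℝ)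
    (u : Fin N → Fin m → ℝ) (x : Fin n → ℝ) : ℝ :=
  (∑ k : Fin N, stageCost Q R ε Bx Bu (predState A B u x k) (u k)) +
    (predState A B u x N) ⬝ᵥ P.mulVec (predState A B u x N)

/-- The shift operator `Ψ_s(U,x) = (u₁,…,u_{N−1}, k_f(U,x))`. -/
def shiftOp {n m N : ℕ} (kf : (Fin N → Fin m → ℝ) → (Fin n → ℝ) → Fin m → ℝ)
    (u : Fin N → Fin m → ℝ) (x : Fin n → ℝ) : Fin N → Fin m → ℝ :=
  fun i => if h : (i : ℕ) + 1 < N then u ⟨(i : ℕ) + 1, h⟩ else kf u x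

theorem dotProduct_mulVec_transpose_mul_mul {ι κ R : Type*} [Fintype ι] [Fintype κ]
    [CommSemiring R] (M : Matrix ι κ R) (S : Matrix ι ι R) (z : κ → R) :
    z ⬝ᵥ (Mᵀ * S * M) *ᵥ z = (M *ᵥ z) ⬝ᵥ S *ᵥ (M *ᵥ z) := by
  rw [← mulVec_mulVec, ← mulVec_mulVec, dotProduct_mulVec, vecMul_transpose]

section Riccati

variable {n m : ℕ} {A : Matrix (Fin n) (Fin n) ℝ} {B : Matrix (Fin n) (Fin m) ℝ}
  {Q : Matrix (Fin n) (Fin n) ℝ} {R : Matrix (Fin m) (Fin m) ℝ}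
  {Mx : Matrix (Fin n) (Fin n) ℝ} {Mu : Matrix (Fin m) (Fin m) ℝ}
  {K : Matrix (Fin m) (Fin n) ℝ} {P : Matrix (Fin n) (Fin n) ℝ} {ε : ℝ}

theorem dotProduct_mulVec_of_riccati
    (hRiccati : P = (A + B * K)ᵀ * P * (A + B * K) + Kᵀ * (R + ε • Mu) * K + Q + ε • Mx)
    (z : Fin n → ℝ) :
    z ⬝ᵥ P *ᵥ z = ((A + B * K) *ᵥ z) ⬝ᵥ P *ᵥ ((A + B * K) *ᵥ z)
      + (K *ᵥ z) ⬝ᵥ R *ᵥ (K *ᵥ z) + ε * ((K *ᵥ z) ⬝ᵥ Mu *ᵥ (K *ᵥ z))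
      + z ⬝ᵥ Q *ᵥ z + ε * (z ⬝ᵥ Mx *ᵥ z) := by
  conv_lhs => rw [hRiccati]
  simp only [add_mulVec, dotProduct_add, dotProduct_mulVec_transpose_mul_mul, smul_mulVec,
    dotProduct_smul, smul_eq_mul]
  ring

/-- The terminal penalty is a control Lyapunov function for the relaxed stage cost under the
local feedback `u = K z`. -/
theorem stageCost_add_terminal_le_of_riccati (hε : 0 ≤ ε)
    {Bx : (Fin n → ℝ) → ℝ} {Bu : (Fin m → ℝ) → ℝ}
    (hRiccati : P = (A + B * K)ᵀ * P * (A + B * K) + Kᵀ * (R + ε • Mu) * K + Q + ε • Mx)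
    (hBx : ∀ x, Bx x ≤ x ⬝ᵥ Mx *ᵥ x) (hBu : ∀ u, Bu u ≤ u ⬝ᵥ Mu *ᵥ u) (z : Fin n → ℝ) :
    stageCost Q R ε Bx Bu z (K *ᵥ z)
      + ((A + B * K) *ᵥ z) ⬝ᵥ P *ᵥ ((A + B * K) *ᵥ z) ≤ z ⬝ᵥ P *ᵥ z := by
  rw [dotProduct_mulVec_of_riccati hRiccati z, stageCost]
  have hx := mul_le_mul_of_nonneg_left (hBx z) hε
  have hu := mul_le_mul_of_nonneg_left (hBu (K *ᵥ z)) hε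
  linarith

end Riccati

section Shift

variable {n m M : ℕ} (A : Matrix (Fin n) (Fin n) ℝ) (B : Matrix (Fin n) (Fin m) ℝ)
  (kf : (Fin (M + 1) → Fin m → ℝ) → (Fin n → ℝ) → Fin m → ℝ)
  (u : Fin (M + 1) → Fin m → ℝ) (x : Fin n → ℝ)

theorem predState_zero_zero {N : ℕ} (k : ℕ) :
    predState A B (0 : Fin N → Fin m → ℝ) 0 k = 0 := by
  induction k with
  | zero => rfl
  | succ k ih => simp [predState, ih]

theorem shiftOp_castSucc (i : Fin M) : shiftOp kf u x i.castSucc = u i.succ :=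
  dif_pos (Nat.succ_lt_succ i.isLt)

theorem shiftOp_last : shiftOp kf u x (Fin.last M) = kf u x :=
  dif_neg (by simp)

theorem predState_shiftOp {k : ℕ} (hk : k ≤ M) :
    predState A B (shiftOp kf u x) (A *ᵥ x + B *ᵥ u 0) k = predState A B u x (k + 1) := by
  induction k with
  | zero => simp [predState]
  | succ k ih =>
    have hk' : k + 1 < M + 1 := Nat.succ_lt_succ hk
    rw [predState, predState, ih (Nat.le_of_succ_le hk),
      dif_pos (Nat.lt_succ_of_le (Nat.le_of_succ_le hk)), dif_pos hk']
    congr 2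
    exact dif_pos hk'

theorem predState_shiftOp_horizon :
    predState A B (shiftOp kf u x) (A *ᵥ x + B *ᵥ u 0) (M + 1)
      = A *ᵥ predState A B u x (M + 1) + B *ᵥ kf u x := by
  rw [predState, predState_shiftOp A B kf u x le_rfl, dif_pos (Nat.lt_succ_self M)]
  congr 2
  exact shiftOp_last kf u x

theorem mpcCost_shiftOp (Q : Matrix (Fin n) (Fin n) ℝ) (R : Matrix (Fin m) (Fin m) ℝ)
    (P : Matrix (Fin n) (Fin n) ℝ) (ε : ℝ) (Bx : (Fin n → ℝ) → ℝ) (Bu : (Fin m → ℝ) → ℝ) :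
    let z := predState A B u x (M + 1)
    mpcCost A B Q R P ε Bx Bu (shiftOp kf u x) (A *ᵥ x + B *ᵥ u 0)
      = mpcCost A B Q R P ε Bx Bu u x - stageCost Q R ε Bx Bu x (u 0) - z ⬝ᵥ P *ᵥ z
        + stageCost Q R ε Bx Bu z (kf u x)
        + (A *ᵥ z + B *ᵥ kf u x) ⬝ᵥ P *ᵥ (A *ᵥ z + B *ᵥ kf u x) := by
  intro z
  have hmid (i : Fin M) :
      stageCost Q R ε Bx Bu (predState A B (shiftOp kf u x) (A *ᵥ x + B *ᵥ u 0) i.castSucc)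
          (shiftOp kf u x i.castSucc)
        = stageCost Q R ε Bx Bu (predState A B u x i.succ) (u i.succ) := by
    rw [Fin.val_castSucc, predState_shiftOp A B kf u x i.isLt.le, shiftOp_castSucc]
    rfl
  unfold mpcCost
  rw [Fin.sum_univ_castSucc, Fin.sum_univ_succ, Finset.sum_congr rfl fun i _ => hmid i,
    Fin.val_last, predState_shiftOp A B kf u x le_rfl, shiftOp_last,
    predState_shiftOp_horizon]
  simp only [Fin.val_zero, predState, z]
  ring

end Shift

theorem shift_decrease_property_general
    {n m N : ℕ} [NeZero N]
    (A : Matrix (Fin n) (Fin n) ℝ) (B : Matrix (Fin n) (Fin m) ℝ)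
    (Q : Matrix (Fin n) (Fin n) ℝ) (R : Matrix (Fin m) (Fin m) ℝ)
    (Mx : Matrix (Fin n) (Fin n) ℝ) (Mu : Matrix (Fin m) (Fin m) ℝ)
    (K : Matrix (Fin m) (Fin n) ℝ) (P : Matrix (Fin n) (Fin n) ℝ)
    (ε : ℝ) (hε : 0 < ε)
    (Bx : (Fin n → ℝ) → ℝ) (Bu : (Fin m → ℝ) → ℝ)
    (hRiccati : P = (A + B * K)ᵀ * P * (A + B * K) + Kᵀ * (R + ε • Mu) * K + Q + ε • Mx)
    (hBx : ∀ x : Fin n → ℝ, Bx x ≤ x ⬝ᵥ Mx.mulVec x)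
    (hBu : ∀ u : Fin m → ℝ, Bu u ≤ u ⬝ᵥ Mu.mulVec u) :
    (fun (u : Fin N → Fin m → ℝ) (x : Fin n → ℝ) =>
        K.mulVec (predState A B u x N)) 0 0 = 0 ∧
    ∀ (u : Fin N → Fin m → ℝ) (x : Fin n → ℝ),
      mpcCost A B Q R P ε Bx Bu
          (shiftOp (fun u' x' => K.mulVec (predState A B u' x' N)) u x)
          (A.mulVec x + B.mulVec (u 0)) -
        mpcCost A B Q R P ε Bx Bu u x ≤
      -(stageCost Q R ε Bx Bu x (u 0)) := by
  refine ⟨by simp only [predState_zero_zero, mulVec_zero], fun u x => ?_⟩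
  obtain ⟨M, rfl⟩ := Nat.exists_eq_add_one_of_ne_zero (NeZero.ne N)
  have hdecrease := stageCost_add_terminal_le_of_riccati hε.le hRiccati hBx hBu
    (predState A B u x (M + 1))
  rw [add_mulVec, ← mulVec_mulVec] at hdecrease
  rw [mpcCost_shiftOp]
  linarith

/-- (Lemma 1, part iii) Under the Riccati-type equation for `(K,P)` and the quadratic
upper bounds on the relaxed barrier functions, the candidate `k_f(U,x) = K x_N(U,x)`
yields the shift decrease property
`Ĵ_N(U⁺,x⁺) − Ĵ_N(U,x) ≤ −ℓ̂(x,u₀)` with `x⁺ = Ax + Bu₀` and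
`U⁺ = (u₁,…,u_{N−1},k_f(U,x))`, and `k_f(0,0) = 0`. -/
theorem shift_decrease_property
    {n m N : ℕ} [NeZero N]
    (A : Matrix (Fin n) (Fin n) ℝ) (B : Matrix (Fin n) (Fin m) ℝ)
    (Q : Matrix (Fin n) (Fin n) ℝ) (R : Matrix (Fin m) (Fin m) ℝ)
    (Mx : Matrix (Fin n) (Fin n) ℝ) (Mu : Matrix (Fin m) (Fin m) ℝ)
    (K : Matrix (Fin m) (Fin n) ℝ) (P : Matrix (Fin n) (Fin n) ℝ)
    (ε : ℝ) (hε : 0 < ε)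
    (Bx : (Fin n → ℝ) → ℝ) (Bu : (Fin m → ℝ) → ℝ)
    (hQsymm : Q.IsSymm) (hQpsd : ∀ x : Fin n → ℝ, 0 ≤ x ⬝ᵥ Q.mulVec x)
    (hRsymm : R.IsSymm) (hRpd : ∀ u : Fin m → ℝ, u ≠ 0 → 0 < u ⬝ᵥ R.mulVec u)
    (hPsymm : P.IsSymm) (hPpd : ∀ x : Fin n → ℝ, x ≠ 0 → 0 < x ⬝ᵥ P.mulVec x)
    (hMxsymm : Mx.IsSymm) (hMxpsd : ∀ x : Fin n → ℝ, 0 ≤ x ⬝ᵥ Mx.mulVec x)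
    (hMusymm : Mu.IsSymm) (hMupsd : ∀ u : Fin m → ℝ, 0 ≤ u ⬝ᵥ Mu.mulVec u)
    (hRiccati : P = (A + B * K)ᵀ * P * (A + B * K) + Kᵀ * (R + ε • Mu) * K + Q + ε • Mx)
    (hBx : ∀ x : Fin n → ℝ, Bx x ≤ x ⬝ᵥ Mx.mulVec x)
    (hBu : ∀ u : Fin m → ℝ, Bu u ≤ u ⬝ᵥ Mu.mulVec u) :
    (fun (u : Fin N → Fin m → ℝ) (x : Fin n → ℝ) =>
        K.mulVec (predState A B u x N)) 0 0 = 0 ∧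
    ∀ (u : Fin N → Fin m → ℝ) (x : Fin n → ℝ),
      mpcCost A B Q R P ε Bx Bu
          (shiftOp (fun u' x' => K.mulVec (predState A B u' x' N)) u x)
          (A.mulVec x + B.mulVec (u 0)) -
        mpcCost A B Q R P ε Bx Bu u x ≤
      -(stageCost Q R ε Bx Bu x (u 0)) :=
  shift_decrease_property_general A B Q R Mx Mu K P ε hε Bx Bu hRiccati hBx hBu
end

section
/- Assume: ℓ̂ is positive definite (ℓ̂(x,u) > 0 for (x,u) ≠ (0,0), ℓ̂(0,0) = 0); Ĵ_N is continuously differentiable and strictly convex in U for each fixed x, nonnegative, and Ĵ_N(0,0) = 0; and γ satisfies γ(U,x) = 0 if and only if ∇_U Ĵ_N(U,x) = 0. If a pair (U,x) ∈ ℝ^{Nm}×ℝⁿ satisfies both ℓ̂(x, Π₀U) = 0 and γ(Ψ_s(U,x), Ax + BΠ₀U) = 0, then U = 0 and x = 0. -/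
open Matrix

/-!
Positive definiteness of `ℓ̂` forces `x = 0` and `u₀ = 0`, so the successor state is `0` and
`Ψ_s(U,x)` is a stationary point of the convex function `Ĵ_N(·,0)`, hence a global minimiser.
Since `Ĵ_N ≥ 0 = Ĵ_N(0,0)`, the origin is a minimiser as well, and strict convexity makes
them equal. `Ψ_s(U,x) = 0` says `u₁ = ⋯ = u_{N-1} = 0`, which together with `u₀ = 0` gives `U = 0`.
-/

theorem ConvexOn.isMinOn_univ_of_hasFDerivAt_zero {E : Type*} [NormedAddCommGroup E]
    [NormedSpace ℝ E] {f : E → ℝ} {p : E} (hf : ConvexOn ℝ Set.univ f)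
    (hp : HasFDerivAt f (0 : E →L[ℝ] ℝ) p) : IsMinOn f Set.univ p := by
  intro y _
  have hline : ConvexOn ℝ Set.univ (f ∘ AffineMap.lineMap (k := ℝ) p y) :=
    hf.comp_affineMap (AffineMap.lineMap p y)
  have hderiv : HasDerivAt (f ∘ AffineMap.lineMap (k := ℝ) p y) 0 0 := by
    simpa using hp.comp_hasDerivAt_of_eq 0 AffineMap.hasDerivAt_lineMap
      (AffineMap.lineMap_apply_zero p y).symm
  have hslope := hline.le_slope_of_hasDerivAt (Set.mem_univ 0) (Set.mem_univ 1) one_pos hderiv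
  simpa [slope_def_field, AffineMap.lineMap_apply_zero, AffineMap.lineMap_apply_one] using hslope

theorem eq_zero_of_shiftOp_eq_zero {n m N : ℕ} [NeZero N]
    {kf : (Fin N → Fin m → ℝ) → (Fin n → ℝ) → Fin m → ℝ}
    {u : Fin N → Fin m → ℝ} {x : Fin n → ℝ} (hu₀ : u 0 = 0) (h : shiftOp kf u x = 0) :
    u = 0 := by
  funext ⟨i, hi⟩
  cases i with
  | zero => exact hu₀
  | succ j => simpa [shiftOp, hi] using congrFun h ⟨j, by omega⟩

theorem invariance_set_is_origin_general
    {n m N : ℕ} [NeZero N]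
    (A : Matrix (Fin n) (Fin n) ℝ) (B : Matrix (Fin n) (Fin m) ℝ)
    (J : (Fin N → Fin m → ℝ) → (Fin n → ℝ) → ℝ)
    (lhat : (Fin n → ℝ) → (Fin m → ℝ) → ℝ)
    (kf : (Fin N → Fin m → ℝ) → (Fin n → ℝ) → Fin m → ℝ)
    (γ : (Fin N → Fin m → ℝ) → (Fin n → ℝ) → ℝ)
    (hlpos : ∀ (x : Fin n → ℝ) (u : Fin m → ℝ), ¬(x = 0 ∧ u = 0) → 0 < lhat x u)
    (hJdiff : ∀ x : Fin n → ℝ, ContDiff ℝ 1 (fun u => J u x))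
    (hJconv : ∀ x : Fin n → ℝ, StrictConvexOn ℝ Set.univ (fun u => J u x))
    (hJnonneg : ∀ (u : Fin N → Fin m → ℝ) (x : Fin n → ℝ), 0 ≤ J u x)
    (hJ00 : J 0 0 = 0)
    (hγzero : ∀ (u : Fin N → Fin m → ℝ) (x : Fin n → ℝ),
      γ u x = 0 ↔ fderiv ℝ (fun u' => J u' x) u = 0) :
    ∀ (u : Fin N → Fin m → ℝ) (x : Fin n → ℝ),
      lhat x (u 0) = 0 →
      γ (shiftOp kf u x) (A.mulVec x + B.mulVec (u 0)) = 0 →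
      u = 0 ∧ x = 0 := by
  intro u x hl hγ
  obtain ⟨rfl, hu₀⟩ : x = 0 ∧ u 0 = 0 := not_not.mp fun h => (hlpos x (u 0) h).ne' hl
  rw [hu₀, mulVec_zero, mulVec_zero, add_zero, hγzero] at hγ
  have hmin_shift : IsMinOn (fun u' => J u' 0) Set.univ (shiftOp kf u 0) :=
    (hJconv 0).convexOn.isMinOn_univ_of_hasFDerivAt_zero
      (hγ ▸ ((hJdiff 0).differentiable one_ne_zero _).hasFDerivAt)
  have hmin_zero : IsMinOn (fun u' => J u' 0) Set.univ 0 := fun u' _ =>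
    show J 0 0 ≤ J u' 0 from hJ00 ▸ hJnonneg u' 0
  have hshift : shiftOp kf u 0 = 0 :=
    (hJconv 0).eq_of_isMinOn hmin_shift hmin_zero (Set.mem_univ _) (Set.mem_univ _)
  exact ⟨eq_zero_of_shiftOp_eq_zero hu₀ hshift, rfl⟩

/-- If the stage cost is positive definite, `Ĵ_N` is continuously differentiable and
strictly convex in `U`, nonnegative with `Ĵ_N(0,0) = 0`, and `γ` vanishes exactly at the
stationary points of `Ĵ_N(·,x)`, then any pair `(U,x)` with `ℓ̂(x,Π₀U) = 0` and
`γ(Ψ_s(U,x), Ax + BΠ₀U) = 0` must be the origin. -/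
theorem invariance_set_is_origin
    {n m N : ℕ} [NeZero N]
    (A : Matrix (Fin n) (Fin n) ℝ) (B : Matrix (Fin n) (Fin m) ℝ)
    (J : (Fin N → Fin m → ℝ) → (Fin n → ℝ) → ℝ)
    (lhat : (Fin n → ℝ) → (Fin m → ℝ) → ℝ)
    (kf : (Fin N → Fin m → ℝ) → (Fin n → ℝ) → Fin m → ℝ)
    (γ : (Fin N → Fin m → ℝ) → (Fin n → ℝ) → ℝ)
    (hlzero : lhat 0 0 = 0)
    (hlpos : ∀ (x : Fin n → ℝ) (u : Fin m → ℝ), ¬(x = 0 ∧ u = 0) → 0 < lhat x u)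
    (hJdiff : ∀ x : Fin n → ℝ, ContDiff ℝ 1 (fun u => J u x))
    (hJconv : ∀ x : Fin n → ℝ, StrictConvexOn ℝ Set.univ (fun u => J u x))
    (hJnonneg : ∀ (u : Fin N → Fin m → ℝ) (x : Fin n → ℝ), 0 ≤ J u x)
    (hJ00 : J 0 0 = 0)
    (hγzero : ∀ (u : Fin N → Fin m → ℝ) (x : Fin n → ℝ),
      γ u x = 0 ↔ fderiv ℝ (fun u' => J u' x) u = 0) :
    ∀ (u : Fin N → Fin m → ℝ) (x : Fin n → ℝ),
      lhat x (u 0) = 0 →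
      γ (shiftOp kf u x) (A.mulVec x + B.mulVec (u 0)) = 0 →
      u = 0 ∧ x = 0 :=
  invariance_set_is_origin_general A B J lhat kf γ hlpos hJdiff hJconv hJnonneg hJ00 hγzero
end

section
/- Let R ∈ ℝ^{m×m} be symmetric positive definite, Q ∈ ℝ^{n×n} symmetric positive semidefinite, and let the symmetric positive semidefinite matrix P ∈ ℝ^{n×n} satisfy the discrete-time algebraic Riccati equation P = AᵀPA − AᵀPB(R + BᵀPB)⁻¹BᵀPA + Q. Then for all x ∈ ℝⁿ and u ∈ ℝᵐ: xᵀQx + uᵀRu + (Ax+Bu)ᵀP(Ax+Bu) ≥ xᵀPx, with equality if and only if u = −(R + BᵀPB)⁻¹BᵀPA·x. -/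
open Matrix

/-! Let `S = R + BᵀPB`, positive definite since `R` is and `P ⪰ 0`. Completing the square in `u`
with respect to `S` gives
`uᵀRu + (Ax+Bu)ᵀP(Ax+Bu) = xᵀ(AᵀPA − AᵀPBS⁻¹BᵀPA)x + wᵀSw` with `w = u + S⁻¹BᵀPAx`,
and by the Riccati equation the first term on the right is `xᵀPx − xᵀQx`. So the Bellman gap is
`wᵀSw ≥ 0`, which vanishes exactly when `w = 0`. -/

section Symmetric

variable {ι κ α : Type*} [Fintype ι] [CommRing α]

theorem Matrix.IsSymm.transpose_mul_mul {P : Matrix ι ι α} (hP : P.IsSymm) (B : Matrix ι κ α) :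
    (Bᵀ * P * B).IsSymm := by
  rw [IsSymm, transpose_mul, transpose_mul, transpose_transpose, hP.eq, Matrix.mul_assoc]

theorem Matrix.IsSymm.dotProduct_mulVec_comm {P : Matrix ι ι α} (hP : P.IsSymm) (a b : ι → α) :
    a ⬝ᵥ P *ᵥ b = b ⬝ᵥ P *ᵥ a := by
  rw [← hP.eq, dotProduct_transpose_mulVec, hP.eq]

theorem Matrix.IsSymm.dotProduct_mulVec_add_two_mul_dotProduct [DecidableEq ι]
    {S : Matrix ι ι α} (hS : S.IsSymm) (hdet : IsUnit S.det) (u v : ι → α) :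
    u ⬝ᵥ S *ᵥ u + 2 * (u ⬝ᵥ v) =
      (u + S⁻¹ *ᵥ v) ⬝ᵥ S *ᵥ (u + S⁻¹ *ᵥ v) - v ⬝ᵥ S⁻¹ *ᵥ v := by
  have hSSinv : S *ᵥ (S⁻¹ *ᵥ v) = v := by rw [mulVec_mulVec, mul_nonsing_inv S hdet, one_mulVec]
  rw [mulVec_add, hSSinv, add_dotProduct, dotProduct_add, dotProduct_add,
    hS.dotProduct_mulVec_comm (S⁻¹ *ᵥ v), hSSinv, dotProduct_comm (S⁻¹ *ᵥ v) v]
  ring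

end Symmetric

section Riccati

variable {ι κ α : Type*} [Fintype ι] [Fintype κ] [CommRing α]

theorem Matrix.mulVec_dotProduct (M : Matrix ι κ α) (a : κ → α) (b : ι → α) :
    M *ᵥ a ⬝ᵥ b = a ⬝ᵥ Mᵀ *ᵥ b := by
  rw [dotProduct_transpose_mulVec, dotProduct_comm]

variable [DecidableEq κ] (A : Matrix ι ι α) (B : Matrix ι κ α) (R : Matrix κ κ α) (P : Matrix ι ι α)

noncomputable def riccatiMap : Matrix ι ι α :=
  Aᵀ * P * A - Aᵀ * P * B * (R + Bᵀ * P * B)⁻¹ * Bᵀ * P * A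

noncomputable def lqrGain : Matrix κ ι α := (R + Bᵀ * P * B)⁻¹ * Bᵀ * P * A

variable {A B R P}

theorem cost_eq_riccatiMap_add (hR : R.IsSymm) (hP : P.IsSymm)
    (hdet : IsUnit (R + Bᵀ * P * B).det) (x : ι → α) (u : κ → α) :
    u ⬝ᵥ R *ᵥ u + (A *ᵥ x + B *ᵥ u) ⬝ᵥ P *ᵥ (A *ᵥ x + B *ᵥ u) =
      x ⬝ᵥ riccatiMap A B R P *ᵥ x +
        (u + lqrGain A B R P *ᵥ x) ⬝ᵥ (R + Bᵀ * P * B) *ᵥ (u + lqrGain A B R P *ᵥ x) := by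
  have hS : (R + Bᵀ * P * B).IsSymm := hR.add (hP.transpose_mul_mul B)
  have hSu : u ⬝ᵥ (R + Bᵀ * P * B) *ᵥ u = u ⬝ᵥ R *ᵥ u + B *ᵥ u ⬝ᵥ P *ᵥ B *ᵥ u := by
    rw [add_mulVec, dotProduct_add, mulVec_dotProduct, mulVec_mulVec, mulVec_mulVec]
  simp only [riccatiMap, lqrGain, sub_mulVec, dotProduct_sub, ← mulVec_mulVec]
  generalize R + Bᵀ * P * B = S at hS hdet hSu ⊢
  set v := Bᵀ *ᵥ P *ᵥ A *ᵥ x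
  have hriccati : x ⬝ᵥ Aᵀ *ᵥ P *ᵥ B *ᵥ S⁻¹ *ᵥ v = v ⬝ᵥ S⁻¹ *ᵥ v := by
    rw [← mulVec_dotProduct, hP.dotProduct_mulVec_comm, mulVec_dotProduct, dotProduct_comm]
  have hexpand : (A *ᵥ x + B *ᵥ u) ⬝ᵥ P *ᵥ (A *ᵥ x + B *ᵥ u) =
      x ⬝ᵥ Aᵀ *ᵥ P *ᵥ A *ᵥ x + 2 * (u ⬝ᵥ v) + B *ᵥ u ⬝ᵥ P *ᵥ B *ᵥ u := by
    rw [mulVec_add, add_dotProduct, dotProduct_add, dotProduct_add,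
      hP.dotProduct_mulVec_comm (A *ᵥ x) (B *ᵥ u), mulVec_dotProduct B, mulVec_dotProduct A]
    ring
  rw [hriccati]
  linear_combination hexpand - hSu + hS.dotProduct_mulVec_add_two_mul_dotProduct hdet u v

end Riccati

section Real

variable {n : Type*} [Fintype n] {M : Matrix n n ℝ}

theorem Matrix.IsSymm.posDef (hM : M.IsSymm) (hpos : ∀ x : n → ℝ, x ≠ 0 → 0 < x ⬝ᵥ M *ᵥ x) :
    M.PosDef :=
  .of_dotProduct_mulVec_pos ((conjTranspose_eq_transpose_of_trivial M).trans hM)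
    fun x hx ↦ by simpa using hpos x hx

theorem Matrix.IsSymm.posSemidef (hM : M.IsSymm) (hnonneg : ∀ x : n → ℝ, 0 ≤ x ⬝ᵥ M *ᵥ x) :
    M.PosSemidef :=
  .of_dotProduct_mulVec_nonneg ((conjTranspose_eq_transpose_of_trivial M).trans hM)
    fun x ↦ by simpa using hnonneg x

theorem Matrix.PosDef.dotProduct_mulVec_eq_zero_iff (hM : M.PosDef) (x : n → ℝ) :
    x ⬝ᵥ M *ᵥ x = 0 ↔ x = 0 := by
  refine ⟨fun h ↦ ?_, fun h ↦ by rw [h, mulVec_zero, dotProduct_zero]⟩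
  by_contra hx
  simpa [h] using hM.dotProduct_mulVec_pos hx

theorem Matrix.PosDef.dotProduct_mulVec_nonneg (hM : M.PosDef) (x : n → ℝ) :
    0 ≤ x ⬝ᵥ M *ᵥ x := by
  simpa using hM.posSemidef.dotProduct_mulVec_nonneg x

end Real

theorem dare_bellman_inequality_general
    {n m : ℕ}
    (A : Matrix (Fin n) (Fin n) ℝ) (B : Matrix (Fin n) (Fin m) ℝ)
    (Q : Matrix (Fin n) (Fin n) ℝ) (R : Matrix (Fin m) (Fin m) ℝ)
    (P : Matrix (Fin n) (Fin n) ℝ)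
    (hRsymm : R.IsSymm) (hRpd : ∀ u : Fin m → ℝ, u ≠ 0 → 0 < u ⬝ᵥ R.mulVec u)
    (hPsymm : P.IsSymm) (hPpsd : ∀ x : Fin n → ℝ, 0 ≤ x ⬝ᵥ P.mulVec x)
    (hDARE : P = Aᵀ * P * A - Aᵀ * P * B * (R + Bᵀ * P * B)⁻¹ * Bᵀ * P * A + Q) :
    ∀ (x : Fin n → ℝ) (u : Fin m → ℝ),
      x ⬝ᵥ P.mulVec x ≤
        x ⬝ᵥ Q.mulVec x + u ⬝ᵥ R.mulVec u +
          (A.mulVec x + B.mulVec u) ⬝ᵥ P.mulVec (A.mulVec x + B.mulVec u) ∧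
      (x ⬝ᵥ Q.mulVec x + u ⬝ᵥ R.mulVec u +
          (A.mulVec x + B.mulVec u) ⬝ᵥ P.mulVec (A.mulVec x + B.mulVec u) =
        x ⬝ᵥ P.mulVec x ↔
        u = -((R + Bᵀ * P * B)⁻¹ * Bᵀ * P * A).mulVec x) := by
  intro x u
  have hS : (R + Bᵀ * P * B).PosDef := (hRsymm.posDef hRpd).add_posSemidef <| by
    simpa using (hPsymm.posSemidef hPpsd).conjTranspose_mul_mul_same B
  have hPx : x ⬝ᵥ P *ᵥ x = x ⬝ᵥ riccatiMap A B R P *ᵥ x + x ⬝ᵥ Q *ᵥ x := by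
    rw [← dotProduct_add, ← add_mulVec]
    exact congrArg (fun M ↦ x ⬝ᵥ M *ᵥ x) hDARE
  have hcost : x ⬝ᵥ Q *ᵥ x + u ⬝ᵥ R *ᵥ u + (A *ᵥ x + B *ᵥ u) ⬝ᵥ P *ᵥ (A *ᵥ x + B *ᵥ u) =
      x ⬝ᵥ P *ᵥ x +
        (u + lqrGain A B R P *ᵥ x) ⬝ᵥ (R + Bᵀ * P * B) *ᵥ (u + lqrGain A B R P *ᵥ x) := by
    rw [add_assoc, cost_eq_riccatiMap_add hRsymm hPsymm ((isUnit_iff_isUnit_det _).mp hS.isUnit),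
      hPx]
    ring
  rw [hcost, le_add_iff_nonneg_right, add_eq_left, hS.dotProduct_mulVec_eq_zero_iff,
    add_eq_zero_iff_eq_neg]
  exact ⟨hS.dotProduct_mulVec_nonneg _, Iff.rfl⟩

/-- If the symmetric positive semidefinite matrix `P` solves the discrete-time algebraic
Riccati equation `P = AᵀPA − AᵀPB(R+BᵀPB)⁻¹BᵀPA + Q` with `R` symmetric positive
definite and `Q` symmetric positive semidefinite, then the Bellman inequality
`xᵀQx + uᵀRu + (Ax+Bu)ᵀP(Ax+Bu) ≥ xᵀPx` holds for all `x, u`, with equality exactly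
at the LQR feedback `u = −(R+BᵀPB)⁻¹BᵀPA x`. -/
theorem dare_bellman_inequality
    {n m : ℕ}
    (A : Matrix (Fin n) (Fin n) ℝ) (B : Matrix (Fin n) (Fin m) ℝ)
    (Q : Matrix (Fin n) (Fin n) ℝ) (R : Matrix (Fin m) (Fin m) ℝ)
    (P : Matrix (Fin n) (Fin n) ℝ)
    (hQsymm : Q.IsSymm) (hQpsd : ∀ x : Fin n → ℝ, 0 ≤ x ⬝ᵥ Q.mulVec x)
    (hRsymm : R.IsSymm) (hRpd : ∀ u : Fin m → ℝ, u ≠ 0 → 0 < u ⬝ᵥ R.mulVec u)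
    (hPsymm : P.IsSymm) (hPpsd : ∀ x : Fin n → ℝ, 0 ≤ x ⬝ᵥ P.mulVec x)
    (hDARE : P = Aᵀ * P * A - Aᵀ * P * B * (R + Bᵀ * P * B)⁻¹ * Bᵀ * P * A + Q) :
    ∀ (x : Fin n → ℝ) (u : Fin m → ℝ),
      x ⬝ᵥ P.mulVec x ≤
        x ⬝ᵥ Q.mulVec x + u ⬝ᵥ R.mulVec u +
          (A.mulVec x + B.mulVec u) ⬝ᵥ P.mulVec (A.mulVec x + B.mulVec u) ∧
      (x ⬝ᵥ Q.mulVec x + u ⬝ᵥ R.mulVec u +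
          (A.mulVec x + B.mulVec u) ⬝ᵥ P.mulVec (A.mulVec x + B.mulVec u) =
        x ⬝ᵥ P.mulVec x ↔
        u = -((R + Bᵀ * P * B)⁻¹ * Bᵀ * P * A).mulVec x) :=
  dare_bellman_inequality_general A B Q R P hRsymm hRpd hPsymm hPpsd hDARE
end

section
/- Consider the closed-loop system and assume the shift decrease condition Ĵ_N(Ψ_s(U,x), Ax+BΠ₀U) − Ĵ_N(U,x) ≤ −ℓ̂(x,Π₀U) and the optimizer decrease condition Ĵ_N(Ψ_o(U,x),x) − Ĵ_N(U,x) ≤ −γ(U,x) with γ ≥ 0 hold for all (U,x), and let P*_uc be a symmetric positive semidefinite solution of the DARE P*_uc = AᵀP*_uc A − AᵀP*_uc B(R + BᵀP*_uc B)⁻¹BᵀP*_uc A + Q. Define α̂(k) := Ĵ_N(U(k),x(k)) − x(k)ᵀP*_uc x(k). Then for every k ∈ ℕ, with u(k) = Π₀U(k): α̂(k+1) − α̂(k) ≤ −ε·(B̂_x(x(k)) + B̂_u(u(k))); in particular, if B̂_x ≥ 0 and B̂_u ≥ 0 pointwise, the sequence α̂(k) is nonincreasing. -/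
open Matrix

/-- The iterated optimization operator. -/
def PhiIter {n m N : ℕ} [NeZero N] (A : Matrix (Fin n) (Fin n) ℝ)
    (B : Matrix (Fin n) (Fin m) ℝ)
    (kf : (Fin N → Fin m → ℝ) → (Fin n → ℝ) → Fin m → ℝ)
    (Ψo : (Fin N → Fin m → ℝ) → (Fin n → ℝ) → Fin N → Fin m → ℝ) :
    ℕ → (Fin N → Fin m → ℝ) → (Fin n → ℝ) → Fin N → Fin m → ℝ
  | 0, u, x => shiftOp kf u x
  | i + 1, u, x => Ψo (PhiIter A B kf Ψo i u x) (A.mulVec x + B.mulVec (u 0))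

/-- The closed-loop system `x(k+1) = Ax(k) + BΠ₀U(k)`, `U(k+1) = Φ^{i_T(k)}(U(k),x(k))`. -/
def cloop {n m N : ℕ} [NeZero N] (A : Matrix (Fin n) (Fin n) ℝ)
    (B : Matrix (Fin n) (Fin m) ℝ)
    (kf : (Fin N → Fin m → ℝ) → (Fin n → ℝ) → Fin m → ℝ)
    (Ψo : (Fin N → Fin m → ℝ) → (Fin n → ℝ) → Fin N → Fin m → ℝ)
    (iT : ℕ → ℕ) (U0 : Fin N → Fin m → ℝ) (x0 : Fin n → ℝ) :
    ℕ → (Fin N → Fin m → ℝ) × (Fin n → ℝ)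
  | 0 => (U0, x0)
  | k + 1 =>
    (PhiIter A B kf Ψo (iT k) (cloop A B kf Ψo iT U0 x0 k).1 (cloop A B kf Ψo iT U0 x0 k).2,
      A.mulVec (cloop A B kf Ψo iT U0 x0 k).2 + B.mulVec ((cloop A B kf Ψo iT U0 x0 k).1 0))

/-! The Riccati equation makes `V(x) = xᵀ P*_uc x` satisfy the Bellman inequality
`V(x) ≤ xᵀQx + uᵀRu + V(Ax + Bu)` for every `u`, by completing the square in `u`.
Every closed-loop update lowers `Ĵ_N` by at least `ℓ̂(x, u)`: the shift does so by assumption and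
no optimizer iteration increases it. In `α̂(k+1) - α̂(k)` the decrease of `V` then absorbs the
quadratic part of `ℓ̂`, and only the barrier terms `ε (B̂_x + B̂_u)` remain. -/

namespace Matrix

variable {𝕜 ι κ : Type*} [Fintype ι] [Fintype κ]

theorem dotProduct_transpose_mul_mul_mulVec [CommSemiring 𝕜] (M : Matrix κ ι 𝕜)
    (N : Matrix κ κ 𝕜) (x : ι → 𝕜) :
    x ⬝ᵥ (Mᵀ * N * M) *ᵥ x = (M *ᵥ x) ⬝ᵥ N *ᵥ (M *ᵥ x) := by
  rw [← mulVec_mulVec, ← mulVec_mulVec, dotProduct_transpose_mulVec, dotProduct_comm]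

theorem IsSymm.dotProduct_mulVec_comm_s13 [CommSemiring 𝕜] {S : Matrix κ κ 𝕜} (hS : S.IsSymm)
    (u v : κ → 𝕜) : u ⬝ᵥ S *ᵥ v = v ⬝ᵥ S *ᵥ u := by
  rw [← dotProduct_transpose_mulVec, hS.eq]

theorem isUnit_det_of_dotProduct_mulVec_pos [Field 𝕜] [PartialOrder 𝕜] [DecidableEq κ]
    {S : Matrix κ κ 𝕜} (hS : ∀ v, v ≠ 0 → 0 < v ⬝ᵥ S *ᵥ v) : IsUnit S.det := by
  refine isUnit_iff_ne_zero.mpr fun hdet => ?_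
  obtain ⟨v, hv, hSv⟩ := exists_mulVec_eq_zero_iff.mpr hdet
  simpa [hSv] using hS v hv

variable [Field 𝕜] [LinearOrder 𝕜] [IsStrictOrderedRing 𝕜]

/-- Completing the square: `u ↦ uᵀSu + 2uᵀg` is minimised at `u = -S⁻¹g`. -/
theorem neg_inv_quadratic_le_quadratic_add_linear [DecidableEq κ] {S : Matrix κ κ 𝕜}
    (hS : S.IsSymm) (hdet : IsUnit S.det) (hpsd : ∀ v, 0 ≤ v ⬝ᵥ S *ᵥ v) (u g : κ → 𝕜) :
    -(g ⬝ᵥ S⁻¹ *ᵥ g) ≤ u ⬝ᵥ S *ᵥ u + 2 * (u ⬝ᵥ g) := by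
  have hg : S *ᵥ (S⁻¹ *ᵥ g) = g := by rw [mulVec_mulVec, mul_nonsing_inv S hdet, one_mulVec]
  have hsq := hpsd (u + S⁻¹ *ᵥ g)
  rw [mulVec_add, dotProduct_add, add_dotProduct, add_dotProduct, hg,
    hS.dotProduct_mulVec_comm_s13 (S⁻¹ *ᵥ g) u, hg, dotProduct_comm (S⁻¹ *ᵥ g) g] at hsq
  linarith

/-- The Bellman inequality of the LQR value function `xᵀPx`: by the Riccati equation, the difference
of the two sides is the square `uᵀSu + 2uᵀGx + (Gx)ᵀS⁻¹(Gx)` with `S = R + BᵀPB`, `G = BᵀPA`. -/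
theorem dotProduct_mulVec_le_of_dare [DecidableEq κ] {A Q P : Matrix ι ι 𝕜}
    {B : Matrix ι κ 𝕜} {R : Matrix κ κ 𝕜} (hR : R.IsSymm) (hRpd : ∀ u, u ≠ 0 → 0 < u ⬝ᵥ R *ᵥ u)
    (hP : P.IsSymm) (hPpsd : ∀ x, 0 ≤ x ⬝ᵥ P *ᵥ x)
    (hDARE : P = Aᵀ * P * A - Aᵀ * P * B * (R + Bᵀ * P * B)⁻¹ * Bᵀ * P * A + Q)
    (x : ι → 𝕜) (u : κ → 𝕜) :
    x ⬝ᵥ P *ᵥ x ≤ x ⬝ᵥ Q *ᵥ x + u ⬝ᵥ R *ᵥ u + (A *ᵥ x + B *ᵥ u) ⬝ᵥ P *ᵥ (A *ᵥ x + B *ᵥ u) := by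
  set S := R + Bᵀ * P * B
  set G := Bᵀ * P * A
  have hS_quad : ∀ v, v ⬝ᵥ S *ᵥ v = v ⬝ᵥ R *ᵥ v + (B *ᵥ v) ⬝ᵥ P *ᵥ (B *ᵥ v) := fun v => by
    rw [add_mulVec, dotProduct_add, dotProduct_transpose_mul_mul_mulVec]
  have hS_pd : ∀ v, v ≠ 0 → 0 < v ⬝ᵥ S *ᵥ v := fun v hv => by
    rw [hS_quad]; linarith [hRpd v hv, hPpsd (B *ᵥ v)]
  have hS_psd : ∀ v, 0 ≤ v ⬝ᵥ S *ᵥ v := fun v => by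
    rcases eq_or_ne v 0 with rfl | hv
    · simp
    · exact (hS_pd v hv).le
  have hS : S.IsSymm := hR.add (by simp [IsSymm, transpose_mul, hP.eq, Matrix.mul_assoc])
  have hQ : x ⬝ᵥ Q *ᵥ x =
      x ⬝ᵥ P *ᵥ x - (A *ᵥ x) ⬝ᵥ P *ᵥ (A *ᵥ x) + (G *ᵥ x) ⬝ᵥ S⁻¹ *ᵥ (G *ᵥ x) := by
    have hQ_eq : Q = P - Aᵀ * P * A + Gᵀ * S⁻¹ * G := by
      have hG : Gᵀ = Aᵀ * P * B := by simp [G, transpose_mul, hP.eq, Matrix.mul_assoc]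
      rw [hG]
      simp only [G, Matrix.mul_assoc] at hDARE ⊢
      nth_rw 1 [hDARE]
      abel
    rw [hQ_eq, add_mulVec, sub_mulVec, dotProduct_add, dotProduct_sub,
      dotProduct_transpose_mul_mul_mulVec, dotProduct_transpose_mul_mul_mulVec]
  have hnext : (A *ᵥ x + B *ᵥ u) ⬝ᵥ P *ᵥ (A *ᵥ x + B *ᵥ u) =
      (A *ᵥ x) ⬝ᵥ P *ᵥ (A *ᵥ x) + 2 * (u ⬝ᵥ G *ᵥ x) + (B *ᵥ u) ⬝ᵥ P *ᵥ (B *ᵥ u) := by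
    have hcross : u ⬝ᵥ G *ᵥ x = (B *ᵥ u) ⬝ᵥ P *ᵥ (A *ᵥ x) := by
      rw [← mulVec_mulVec, ← mulVec_mulVec, dotProduct_transpose_mulVec, dotProduct_comm]
    rw [mulVec_add, dotProduct_add, add_dotProduct, add_dotProduct, hcross,
      hP.dotProduct_mulVec_comm_s13 (A *ᵥ x) (B *ᵥ u)]
    ring
  have hsquare := neg_inv_quadratic_le_quadratic_add_linear hS
    (isUnit_det_of_dotProduct_mulVec_pos hS_pd) hS_psd u (G *ᵥ x)
  rw [hS_quad] at hsquare
  linarith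

end Matrix

section ClosedLoop

variable {n m N : ℕ} [NeZero N] {A : Matrix (Fin n) (Fin n) ℝ} {B : Matrix (Fin n) (Fin m) ℝ}
  {kf : (Fin N → Fin m → ℝ) → (Fin n → ℝ) → Fin m → ℝ}
  {Ψo : (Fin N → Fin m → ℝ) → (Fin n → ℝ) → Fin N → Fin m → ℝ}

theorem PhiIter_cost_le {J : (Fin N → Fin m → ℝ) → (Fin n → ℝ) → ℝ}
    {ℓ : (Fin n → ℝ) → (Fin m → ℝ) → ℝ}
    (hshift : ∀ u x, J (shiftOp kf u x) (A *ᵥ x + B *ᵥ u 0) - J u x ≤ -ℓ x (u 0))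
    (hopt : ∀ u x, J (Ψo u x) x ≤ J u x) (i : ℕ) (u : Fin N → Fin m → ℝ) (x : Fin n → ℝ) :
    J (PhiIter A B kf Ψo i u x) (A *ᵥ x + B *ᵥ u 0) ≤ J u x - ℓ x (u 0) := by
  induction i with
  | zero => simp only [PhiIter]; linarith [hshift u x]
  | succ i ih => exact (hopt _ _).trans ih

theorem PhiIter_decreases_alpha {Q P Puc : Matrix (Fin n) (Fin n) ℝ} {R : Matrix (Fin m) (Fin m) ℝ}
    {ε : ℝ} {Bx : (Fin n → ℝ) → ℝ} {Bu : (Fin m → ℝ) → ℝ}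
    (hR : R.IsSymm) (hRpd : ∀ u, u ≠ 0 → 0 < u ⬝ᵥ R *ᵥ u)
    (hshift : ∀ u x, mpcCost A B Q R P ε Bx Bu (shiftOp kf u x) (A *ᵥ x + B *ᵥ u 0) -
      mpcCost A B Q R P ε Bx Bu u x ≤ -stageCost Q R ε Bx Bu x (u 0))
    (hopt : ∀ u x, mpcCost A B Q R P ε Bx Bu (Ψo u x) x ≤ mpcCost A B Q R P ε Bx Bu u x)
    (hPuc : Puc.IsSymm) (hPucpsd : ∀ x, 0 ≤ x ⬝ᵥ Puc *ᵥ x)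
    (hDARE : Puc = Aᵀ * Puc * A - Aᵀ * Puc * B * (R + Bᵀ * Puc * B)⁻¹ * Bᵀ * Puc * A + Q)
    (i : ℕ) (u : Fin N → Fin m → ℝ) (x : Fin n → ℝ) :
    (mpcCost A B Q R P ε Bx Bu (PhiIter A B kf Ψo i u x) (A *ᵥ x + B *ᵥ u 0) -
        (A *ᵥ x + B *ᵥ u 0) ⬝ᵥ Puc *ᵥ (A *ᵥ x + B *ᵥ u 0)) -
      (mpcCost A B Q R P ε Bx Bu u x - x ⬝ᵥ Puc *ᵥ x) ≤ -(ε * (Bx x + Bu (u 0))) := by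
  have hcost := PhiIter_cost_le hshift hopt i u x
  have hdare := dotProduct_mulVec_le_of_dare hR hRpd hPuc hPucpsd hDARE x (u 0)
  unfold stageCost at hcost
  linarith

end ClosedLoop

theorem alpha_monotone_decrease_general
    {n m N : ℕ} [NeZero N]
    (A : Matrix (Fin n) (Fin n) ℝ) (B : Matrix (Fin n) (Fin m) ℝ)
    (Q : Matrix (Fin n) (Fin n) ℝ) (R : Matrix (Fin m) (Fin m) ℝ)
    (P Puc : Matrix (Fin n) (Fin n) ℝ) (ε : ℝ) (hε : 0 < ε)
    (Bx : (Fin n → ℝ) → ℝ) (Bu : (Fin m → ℝ) → ℝ)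
    (kf : (Fin N → Fin m → ℝ) → (Fin n → ℝ) → Fin m → ℝ)
    (Ψo : (Fin N → Fin m → ℝ) → (Fin n → ℝ) → Fin N → Fin m → ℝ)
    (γ : (Fin N → Fin m → ℝ) → (Fin n → ℝ) → ℝ)
    (iT : ℕ → ℕ) (U0 : Fin N → Fin m → ℝ) (x0 : Fin n → ℝ)
    (hRsymm : R.IsSymm) (hRpd : ∀ u : Fin m → ℝ, u ≠ 0 → 0 < u ⬝ᵥ R.mulVec u)
    (hshift : ∀ (u : Fin N → Fin m → ℝ) (x : Fin n → ℝ),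
      mpcCost A B Q R P ε Bx Bu (shiftOp kf u x) (A.mulVec x + B.mulVec (u 0)) -
          mpcCost A B Q R P ε Bx Bu u x ≤ -(stageCost Q R ε Bx Bu x (u 0)))
    (hopt : ∀ (u : Fin N → Fin m → ℝ) (x : Fin n → ℝ),
      mpcCost A B Q R P ε Bx Bu (Ψo u x) x - mpcCost A B Q R P ε Bx Bu u x ≤ -(γ u x))
    (hγnonneg : ∀ (u : Fin N → Fin m → ℝ) (x : Fin n → ℝ), 0 ≤ γ u x)
    (hPucsymm : Puc.IsSymm) (hPucpsd : ∀ x : Fin n → ℝ, 0 ≤ x ⬝ᵥ Puc.mulVec x)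
    (hDARE : Puc = Aᵀ * Puc * A -
      Aᵀ * Puc * B * (R + Bᵀ * Puc * B)⁻¹ * Bᵀ * Puc * A + Q) :
    (∀ k : ℕ,
      (mpcCost A B Q R P ε Bx Bu (cloop A B kf Ψo iT U0 x0 (k + 1)).1
          (cloop A B kf Ψo iT U0 x0 (k + 1)).2 -
        (cloop A B kf Ψo iT U0 x0 (k + 1)).2 ⬝ᵥ
          Puc.mulVec (cloop A B kf Ψo iT U0 x0 (k + 1)).2) -
      (mpcCost A B Q R P ε Bx Bu (cloop A B kf Ψo iT U0 x0 k).1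
          (cloop A B kf Ψo iT U0 x0 k).2 -
        (cloop A B kf Ψo iT U0 x0 k).2 ⬝ᵥ
          Puc.mulVec (cloop A B kf Ψo iT U0 x0 k).2) ≤
      -(ε * (Bx (cloop A B kf Ψo iT U0 x0 k).2 +
             Bu ((cloop A B kf Ψo iT U0 x0 k).1 0)))) ∧
    ((∀ x : Fin n → ℝ, 0 ≤ Bx x) → (∀ u : Fin m → ℝ, 0 ≤ Bu u) →
      ∀ k : ℕ,
        mpcCost A B Q R P ε Bx Bu (cloop A B kf Ψo iT U0 x0 (k + 1)).1
            (cloop A B kf Ψo iT U0 x0 (k + 1)).2 -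
          (cloop A B kf Ψo iT U0 x0 (k + 1)).2 ⬝ᵥ
            Puc.mulVec (cloop A B kf Ψo iT U0 x0 (k + 1)).2 ≤
        mpcCost A B Q R P ε Bx Bu (cloop A B kf Ψo iT U0 x0 k).1
            (cloop A B kf Ψo iT U0 x0 k).2 -
          (cloop A B kf Ψo iT U0 x0 k).2 ⬝ᵥ
            Puc.mulVec (cloop A B kf Ψo iT U0 x0 k).2) := by
  have hstep := fun k => PhiIter_decreases_alpha (Ψo := Ψo) hRsymm hRpd hshift
    (fun u x => by linarith [hopt u x, hγnonneg u x]) hPucsymm hPucpsd hDARE (iT k)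
    (cloop A B kf Ψo iT U0 x0 k).1 (cloop A B kf Ψo iT U0 x0 k).2
  exact ⟨hstep, fun hBx hBu k => sub_nonpos.mp <| (hstep k).trans <| neg_nonpos.mpr <|
    mul_nonneg hε.le (add_nonneg (hBx _) (hBu _))⟩

/-- Along closed-loop trajectories, the quantity
`α̂(k) = Ĵ_N(U(k),x(k)) − x(k)ᵀ P*_uc x(k)` decreases by at least
`ε(B̂_x(x(k)) + B̂_u(u(k)))` at each step; in particular it is nonincreasing whenever
the barrier functions are pointwise nonnegative. -/
theorem alpha_monotone_decrease
    {n m N : ℕ} [NeZero N]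
    (A : Matrix (Fin n) (Fin n) ℝ) (B : Matrix (Fin n) (Fin m) ℝ)
    (Q : Matrix (Fin n) (Fin n) ℝ) (R : Matrix (Fin m) (Fin m) ℝ)
    (P Puc : Matrix (Fin n) (Fin n) ℝ) (ε : ℝ) (hε : 0 < ε)
    (Bx : (Fin n → ℝ) → ℝ) (Bu : (Fin m → ℝ) → ℝ)
    (kf : (Fin N → Fin m → ℝ) → (Fin n → ℝ) → Fin m → ℝ)
    (Ψo : (Fin N → Fin m → ℝ) → (Fin n → ℝ) → Fin N → Fin m → ℝ)
    (γ : (Fin N → Fin m → ℝ) → (Fin n → ℝ) → ℝ)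
    (iT : ℕ → ℕ) (U0 : Fin N → Fin m → ℝ) (x0 : Fin n → ℝ)
    (hQsymm : Q.IsSymm) (hQpsd : ∀ x : Fin n → ℝ, 0 ≤ x ⬝ᵥ Q.mulVec x)
    (hRsymm : R.IsSymm) (hRpd : ∀ u : Fin m → ℝ, u ≠ 0 → 0 < u ⬝ᵥ R.mulVec u)
    (hPsymm : P.IsSymm) (hPpd : ∀ x : Fin n → ℝ, x ≠ 0 → 0 < x ⬝ᵥ P.mulVec x)
    (hshift : ∀ (u : Fin N → Fin m → ℝ) (x : Fin n → ℝ),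
      mpcCost A B Q R P ε Bx Bu (shiftOp kf u x) (A.mulVec x + B.mulVec (u 0)) -
          mpcCost A B Q R P ε Bx Bu u x ≤ -(stageCost Q R ε Bx Bu x (u 0)))
    (hopt : ∀ (u : Fin N → Fin m → ℝ) (x : Fin n → ℝ),
      mpcCost A B Q R P ε Bx Bu (Ψo u x) x - mpcCost A B Q R P ε Bx Bu u x ≤ -(γ u x))
    (hγnonneg : ∀ (u : Fin N → Fin m → ℝ) (x : Fin n → ℝ), 0 ≤ γ u x)
    (hPucsymm : Puc.IsSymm) (hPucpsd : ∀ x : Fin n → ℝ, 0 ≤ x ⬝ᵥ Puc.mulVec x)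
    (hDARE : Puc = Aᵀ * Puc * A -
      Aᵀ * Puc * B * (R + Bᵀ * Puc * B)⁻¹ * Bᵀ * Puc * A + Q) :
    (∀ k : ℕ,
      (mpcCost A B Q R P ε Bx Bu (cloop A B kf Ψo iT U0 x0 (k + 1)).1
          (cloop A B kf Ψo iT U0 x0 (k + 1)).2 -
        (cloop A B kf Ψo iT U0 x0 (k + 1)).2 ⬝ᵥ
          Puc.mulVec (cloop A B kf Ψo iT U0 x0 (k + 1)).2) -
      (mpcCost A B Q R P ε Bx Bu (cloop A B kf Ψo iT U0 x0 k).1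
          (cloop A B kf Ψo iT U0 x0 k).2 -
        (cloop A B kf Ψo iT U0 x0 k).2 ⬝ᵥ
          Puc.mulVec (cloop A B kf Ψo iT U0 x0 k).2) ≤
      -(ε * (Bx (cloop A B kf Ψo iT U0 x0 k).2 +
             Bu ((cloop A B kf Ψo iT U0 x0 k).1 0)))) ∧
    ((∀ x : Fin n → ℝ, 0 ≤ Bx x) → (∀ u : Fin m → ℝ, 0 ≤ Bu u) →
      ∀ k : ℕ,
        mpcCost A B Q R P ε Bx Bu (cloop A B kf Ψo iT U0 x0 (k + 1)).1
            (cloop A B kf Ψo iT U0 x0 (k + 1)).2 -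
          (cloop A B kf Ψo iT U0 x0 (k + 1)).2 ⬝ᵥ
            Puc.mulVec (cloop A B kf Ψo iT U0 x0 (k + 1)).2 ≤
        mpcCost A B Q R P ε Bx Bu (cloop A B kf Ψo iT U0 x0 k).1
            (cloop A B kf Ψo iT U0 x0 k).2 -
          (cloop A B kf Ψo iT U0 x0 k).2 ⬝ᵥ
            Puc.mulVec (cloop A B kf Ψo iT U0 x0 k).2) :=
  alpha_monotone_decrease_general A B Q R P Puc ε hε Bx Bu kf Ψo γ iT U0 x0 hRsymm hRpd hshift hopt
    hγnonneg hPucsymm hPucpsd hDARE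
end

section
/- (Theorem 2) Consider the closed-loop system under the shift and optimizer decrease conditions, with B̂_x and B̂_u positive definite recentered relaxed barrier functions for the compact polytopes X = {x : C_x x ≤ d_x} and U = {u : C_u u ≤ d_u} (all entries of d_x, d_u strictly positive), with P*_uc a symmetric positive semidefinite DARE solution for (A,B,Q,R), and assume the closed-loop trajectories satisfy (U(k),x(k)) → (0,0) as k → ∞. Define α̂(k) := Ĵ_N(U(k),x(k)) − x(k)ᵀP*_uc x(k), and the maximal constraint violation quantities ẑ_xⁱ(k) := sup{C_xⁱξ − d_xⁱ : ξ ∈ ℝⁿ, ε·B̂_x(ξ) ≤ α̂(k)} and ẑ_uʲ(k) := sup{C_uʲv − d_uʲ : v ∈ ℝᵐ, ε·B̂_u(v) ≤ α̂(k)}. Then for every initialization (U₀,x₀), every sequence i_T(k) ∈ ℕ, every k ∈ ℕ, and all rows i, j: (a) C_xⁱ x(k) ≤ d_xⁱ + ẑ_xⁱ(k) and C_uʲ u(k) ≤ d_uʲ + ẑ_uʲ(k) with u(k) = Π₀U(k); (b) ẑ_xⁱ(k+1) ≤ ẑ_xⁱ(k) and ẑ_uʲ(k+1) ≤ ẑ_uʲ(k);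 (c) there exists a finite k₀ ∈ ℕ such that ẑ_xⁱ(k) ≤ 0 and ẑ_uʲ(k) ≤ 0 for all k ≥ k₀ and all i, j. -/
open Matrix

/-! Along the closed loop the cost decreases by at least the stage cost, while the DARE solution
satisfies the Bellman inequality `xᵀP x ≤ xᵀQx + uᵀRu + (Ax+Bu)ᵀP(Ax+Bu)`. Hence the gap
`α̂ = Ĵ_N - xᵀP*_uc x` drops in each step by at least `ε B̂_x(x) + ε B̂_u(u)`: it is nonincreasing
and tends to `0` by continuity, so it is nonnegative and bounds both barrier terms. The violation
bounds are suprema of continuous functions over compact sublevel sets, hence monotone in the level,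
and at small levels the sublevel set misses the closed set where a constraint is violated, because
the barrier is bounded away from `0` there on compacts. -/

open Filter Topology

theorem nonneg_of_map_zero_of_pos {E : Type*} [Zero E] {f : E → ℝ} (h0 : f 0 = 0)
    (hpos : ∀ x, x ≠ 0 → 0 < f x) (x : E) : 0 ≤ f x := by
  rcases eq_or_ne x 0 with rfl | hx
  · exact h0.ge
  · exact (hpos x hx).le

theorem antitone_and_le_of_succ_add_le {a p : ℕ → ℝ} (hp : ∀ k, 0 ≤ p k)
    (hdec : ∀ k, a (k + 1) + p k ≤ a k) (ha : Tendsto a atTop (𝓝 0)) :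
    Antitone a ∧ ∀ k, p k ≤ a k := by
  have hanti : Antitone a := antitone_nat_of_succ_le fun k => by linarith [hdec k, hp k]
  exact ⟨hanti, fun k => by linarith [hdec k, hanti.le_of_tendsto ha (k + 1)]⟩

section SublevelSup

variable {E : Type*} [TopologicalSpace E]

theorem isCompact_setOf_le_of_tendsto_cocompact {α : Type*} [LinearOrder α] [TopologicalSpace α]
    [ClosedIicTopology α] [NoMaxOrder α] {f : E → α} (hf : Continuous f)
    (hcoer : Tendsto f (cocompact E) atTop) (c : α) : IsCompact {x | f x ≤ c} := by
  obtain ⟨K, hK, hKc⟩ := mem_cocompact.1 (hcoer (Ioi_mem_atTop c))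
  refine hK.of_isClosed_subset (isClosed_Iic.preimage hf) fun x hx => ?_
  by_contra hxK
  exact (hKc hxK : c < f x).not_ge hx

noncomputable def sublevelSup (f g : E → ℝ) (c : ℝ) : ℝ :=
  sSup {t | ∃ x, f x ≤ c ∧ t = g x}

variable {f g : E → ℝ} {c d : ℝ}

theorem bddAbove_setOf_sublevel (hK : IsCompact {x | f x ≤ c}) (hg : Continuous g) :
    BddAbove {t | ∃ x, f x ≤ c ∧ t = g x} := by
  refine (hK.image hg).bddAbove.mono ?_
  rintro _ ⟨x, hx, rfl⟩
  exact ⟨x, hx, rfl⟩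

theorem le_sublevelSup (hK : IsCompact {x | f x ≤ c}) (hg : Continuous g) {x : E}
    (hx : f x ≤ c) : g x ≤ sublevelSup f g c :=
  le_csSup (bddAbove_setOf_sublevel hK hg) ⟨x, hx, rfl⟩

theorem sublevelSup_mono (hK : IsCompact {x | f x ≤ d}) (hg : Continuous g)
    (hne : ∃ x, f x ≤ c) (hcd : c ≤ d) : sublevelSup f g c ≤ sublevelSup f g d := by
  obtain ⟨x, hx⟩ := hne
  refine csSup_le_csSup (bddAbove_setOf_sublevel hK hg) ⟨g x, x, hx, rfl⟩ ?_
  rintro _ ⟨y, hy, rfl⟩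
  exact ⟨y, hy.trans hcd, rfl⟩

theorem eventually_sublevelSup_nonpos {ι : Type*} {l : Filter ι} {a : ι → ℝ}
    (hf : Continuous f) (hcoer : Tendsto f (cocompact E) atTop) (hg : Continuous g)
    (hpos : ∀ x, 0 ≤ g x → 0 < f x) (ha : Tendsto a l (𝓝 0)) :
    ∀ᶠ k in l, sublevelSup f g (a k) ≤ 0 := by
  obtain ⟨δ, hδ, hδf⟩ := ((isCompact_setOf_le_of_tendsto_cocompact hf hcoer 1).inter_right
    (isClosed_le continuous_const hg)).exists_forall_le' hf.continuousOn fun x hx => hpos x hx.2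
  filter_upwards [ha.eventually_lt_const one_pos, ha.eventually_lt_const hδ] with k hk1 hkδ
  refine Real.sSup_nonpos fun _ ⟨x, hx, hgx⟩ => hgx ▸ ?_
  by_contra! hgx
  exact (hδf x ⟨hx.trans hk1.le, hgx.le⟩).not_gt (hx.trans_lt hkδ)

theorem sublevelSup_along_antitone {ι : Type*} [Finite ι] {g : ι → E → ℝ}
    (hf : Continuous f) (hcoer : Tendsto f (cocompact E) atTop) (hg : ∀ i, Continuous (g i))
    (hpos : ∀ i x, 0 ≤ g i x → 0 < f x) {a : ℕ → ℝ} (ha : Antitone a)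
    (ha0 : Tendsto a atTop (𝓝 0)) {y : ℕ → E} (hy : ∀ k, f (y k) ≤ a k) :
    (∀ k i, g i (y k) ≤ sublevelSup f (g i) (a k)) ∧
    (∀ k i, sublevelSup f (g i) (a (k + 1)) ≤ sublevelSup f (g i) (a k)) ∧
    ∀ᶠ k in atTop, ∀ i, sublevelSup f (g i) (a k) ≤ 0 := by
  have hK := isCompact_setOf_le_of_tendsto_cocompact hf hcoer
  refine ⟨fun k i => le_sublevelSup (hK _) (hg i) (hy k), fun k i => ?_,
    eventually_all.2 fun i => eventually_sublevelSup_nonpos hf hcoer (hg i) (hpos i) ha0⟩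
  exact sublevelSup_mono (hK _) (hg i) ⟨y (k + 1), hy (k + 1)⟩ (ha k.le_succ)

end SublevelSup

section Riccati

variable {n m : Type*} [Fintype n] [Fintype m]

theorem dotProduct_transpose_mulVec_eq (M : Matrix n m ℝ) (x : m → ℝ) (y : n → ℝ) :
    x ⬝ᵥ Mᵀ *ᵥ y = M *ᵥ x ⬝ᵥ y := by
  rw [dotProduct_mulVec, vecMul_transpose]

theorem Matrix.IsSymm.dotProduct_mulVec_comm_s14 {M : Matrix n n ℝ} (hM : M.IsSymm) (x y : n → ℝ) :
    x ⬝ᵥ M *ᵥ y = y ⬝ᵥ M *ᵥ x := by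
  simpa only [hM.eq] using dotProduct_transpose_mulVec M x y

variable [DecidableEq m]

theorem quadForm_le_of_dare (A : Matrix n n ℝ) (B : Matrix n m ℝ) (Q : Matrix n n ℝ)
    (R : Matrix m m ℝ) (P : Matrix n n ℝ)
    (hR : R.IsSymm) (hRpd : ∀ u : m → ℝ, u ≠ 0 → 0 < u ⬝ᵥ R *ᵥ u)
    (hP : P.IsSymm) (hPpsd : ∀ x : n → ℝ, 0 ≤ x ⬝ᵥ P *ᵥ x)
    (hDARE : P = Aᵀ * P * A - Aᵀ * P * B * (R + Bᵀ * P * B)⁻¹ * Bᵀ * P * A + Q)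
    (x : n → ℝ) (u : m → ℝ) :
    x ⬝ᵥ P *ᵥ x ≤ x ⬝ᵥ Q *ᵥ x + u ⬝ᵥ R *ᵥ u + (A *ᵥ x + B *ᵥ u) ⬝ᵥ P *ᵥ (A *ᵥ x + B *ᵥ u) := by
  set M := R + Bᵀ * P * B
  have hquad (v : m → ℝ) : v ⬝ᵥ M *ᵥ v = v ⬝ᵥ R *ᵥ v + B *ᵥ v ⬝ᵥ P *ᵥ (B *ᵥ v) := by
    rw [add_mulVec, dotProduct_add, ← mulVec_mulVec, ← mulVec_mulVec,
      dotProduct_transpose_mulVec_eq]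
  have hMpd (v : m → ℝ) (hv : v ≠ 0) : 0 < v ⬝ᵥ M *ᵥ v :=
    hquad v ▸ add_pos_of_pos_of_nonneg (hRpd v hv) (hPpsd _)
  have hMsymm : M.IsSymm :=
    hR.add (by simp only [IsSymm, transpose_mul, transpose_transpose, hP.eq, Matrix.mul_assoc])
  have hMinj : Function.Injective M.mulVec := fun v v' hvv' => by
    by_contra hne
    have h0 : M *ᵥ (v - v') = 0 := by rw [mulVec_sub, hvv', sub_self]
    simpa [h0] using hMpd (v - v') (sub_ne_zero.2 hne)
  have hMinv : M * M⁻¹ = 1 :=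
    M.mul_nonsing_inv ((isUnit_iff_isUnit_det M).1 (mulVec_injective_iff_isUnit.1 hMinj))
  -- completing the square: the slack is `(u + w)ᵀ M (u + w)`, where `-w` is the LQR input at `x`
  set c := Bᵀ *ᵥ (P *ᵥ (A *ᵥ x))
  set w := M⁻¹ *ᵥ c
  have hMw : M *ᵥ w = c := by rw [mulVec_mulVec, hMinv, one_mulVec]
  have hdare : x ⬝ᵥ P *ᵥ x = A *ᵥ x ⬝ᵥ P *ᵥ (A *ᵥ x) - c ⬝ᵥ w + x ⬝ᵥ Q *ᵥ x := by
    conv_lhs => rw [hDARE]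
    simp only [add_mulVec, sub_mulVec, dotProduct_add, dotProduct_sub, ← mulVec_mulVec,
      dotProduct_transpose_mulVec_eq]
    rw [hP.dotProduct_mulVec_comm_s14 (A *ᵥ x) (B *ᵥ _), ← dotProduct_transpose_mulVec_eq B,
      dotProduct_comm _ c]
  have hexpand : (A *ᵥ x + B *ᵥ u) ⬝ᵥ P *ᵥ (A *ᵥ x + B *ᵥ u) =
      A *ᵥ x ⬝ᵥ P *ᵥ (A *ᵥ x) + 2 * (u ⬝ᵥ c) + B *ᵥ u ⬝ᵥ P *ᵥ (B *ᵥ u) := by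
    rw [mulVec_add, dotProduct_add, add_dotProduct, add_dotProduct,
      hP.dotProduct_mulVec_comm_s14 (A *ᵥ x) (B *ᵥ u), dotProduct_transpose_mulVec_eq]
    ring
  have hsquare : (u + w) ⬝ᵥ M *ᵥ (u + w) = u ⬝ᵥ M *ᵥ u + 2 * (u ⬝ᵥ c) + c ⬝ᵥ w := by
    rw [mulVec_add, dotProduct_add, add_dotProduct, add_dotProduct,
      hMsymm.dotProduct_mulVec_comm_s14 w u, hMw, dotProduct_comm w c]
    ring
  linarith [hquad u, nonneg_of_map_zero_of_pos (f := fun v => v ⬝ᵥ M *ᵥ v) (by simp) hMpd (u + w)]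

end Riccati

section MPC

variable {n m N : ℕ} (A : Matrix (Fin n) (Fin n) ℝ) (B : Matrix (Fin n) (Fin m) ℝ)

theorem predState_zero (k : ℕ) : predState (N := N) A B 0 0 k = 0 := by
  induction k with
  | zero => rfl
  | succ k ih => simp [predState, ih]

theorem mpcCost_zero (Q P : Matrix (Fin n) (Fin n) ℝ) (R : Matrix (Fin m) (Fin m) ℝ) (ε : ℝ)
    {Bx : (Fin n → ℝ) → ℝ} {Bu : (Fin m → ℝ) → ℝ} (hBx0 : Bx 0 = 0) (hBu0 : Bu 0 = 0) :
    mpcCost (N := N) A B Q R P ε Bx Bu 0 0 = 0 := by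
  simp [mpcCost, stageCost, predState_zero, hBx0, hBu0]

theorem continuous_predState (k : ℕ) :
    Continuous fun p : (Fin N → Fin m → ℝ) × (Fin n → ℝ) => predState A B p.1 p.2 k := by
  induction k with
  | zero => exact continuous_snd
  | succ k ih =>
    simp only [predState]
    split_ifs <;> fun_prop

theorem continuous_mpcCost (Q P : Matrix (Fin n) (Fin n) ℝ) (R : Matrix (Fin m) (Fin m) ℝ)
    (ε : ℝ) {Bx : (Fin n → ℝ) → ℝ} {Bu : (Fin m → ℝ) → ℝ}
    (hBx : Continuous Bx) (hBu : Continuous Bu) :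
    Continuous fun p : (Fin N → Fin m → ℝ) × (Fin n → ℝ) =>
      mpcCost A B Q R P ε Bx Bu p.1 p.2 := by
  have := continuous_predState (N := N) A B
  simp only [mpcCost, stageCost]
  fun_prop

variable [NeZero N] (kf : (Fin N → Fin m → ℝ) → (Fin n → ℝ) → Fin m → ℝ)
  (Ψo : (Fin N → Fin m → ℝ) → (Fin n → ℝ) → Fin N → Fin m → ℝ)
  {J : (Fin N → Fin m → ℝ) → (Fin n → ℝ) → ℝ}

theorem cost_PhiIter_le_cost_shiftOp (hopt : ∀ u x, J (Ψo u x) x ≤ J u x) (i : ℕ)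
    (u : Fin N → Fin m → ℝ) (x : Fin n → ℝ) :
    J (PhiIter A B kf Ψo i u x) (A *ᵥ x + B *ᵥ u 0) ≤ J (shiftOp kf u x) (A *ᵥ x + B *ᵥ u 0) := by
  induction i with
  | zero => exact le_rfl
  | succ i ih => exact (hopt _ _).trans ih

theorem cost_PhiIter_le {ℓ : (Fin n → ℝ) → (Fin m → ℝ) → ℝ}
    (hshift : ∀ u x, J (shiftOp kf u x) (A *ᵥ x + B *ᵥ u 0) - J u x ≤ -ℓ x (u 0))
    (hopt : ∀ u x, J (Ψo u x) x ≤ J u x) (i : ℕ) (u : Fin N → Fin m → ℝ) (x : Fin n → ℝ) :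
    J (PhiIter A B kf Ψo i u x) (A *ᵥ x + B *ᵥ u 0) ≤ J u x - ℓ x (u 0) := by
  linarith [cost_PhiIter_le_cost_shiftOp A B kf Ψo hopt i u x, hshift u x]

theorem valueGap_PhiIter_add_le (Q P Puc : Matrix (Fin n) (Fin n) ℝ) (R : Matrix (Fin m) (Fin m) ℝ)
    (ε : ℝ) {Bx : (Fin n → ℝ) → ℝ} {Bu : (Fin m → ℝ) → ℝ}
    (hshift : ∀ u x, mpcCost A B Q R P ε Bx Bu (shiftOp kf u x) (A *ᵥ x + B *ᵥ u 0) -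
      mpcCost A B Q R P ε Bx Bu u x ≤ -stageCost Q R ε Bx Bu x (u 0))
    (hopt : ∀ u x, mpcCost A B Q R P ε Bx Bu (Ψo u x) x ≤ mpcCost A B Q R P ε Bx Bu u x)
    (hR : R.IsSymm) (hRpd : ∀ u : Fin m → ℝ, u ≠ 0 → 0 < u ⬝ᵥ R *ᵥ u)
    (hPuc : Puc.IsSymm) (hPucpsd : ∀ x : Fin n → ℝ, 0 ≤ x ⬝ᵥ Puc *ᵥ x)
    (hDARE : Puc = Aᵀ * Puc * A - Aᵀ * Puc * B * (R + Bᵀ * Puc * B)⁻¹ * Bᵀ * Puc * A + Q)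
    (i : ℕ) (u : Fin N → Fin m → ℝ) (x : Fin n → ℝ) :
    mpcCost A B Q R P ε Bx Bu (PhiIter A B kf Ψo i u x) (A *ᵥ x + B *ᵥ u 0) -
        (A *ᵥ x + B *ᵥ u 0) ⬝ᵥ Puc *ᵥ (A *ᵥ x + B *ᵥ u 0) + (ε * Bx x + ε * Bu (u 0)) ≤
      mpcCost A B Q R P ε Bx Bu u x - x ⬝ᵥ Puc *ᵥ x := by
  have hcost := cost_PhiIter_le A B kf Ψo hshift hopt i u x
  have hbellman := quadForm_le_of_dare A B Q R Puc hR hRpd hPuc hPucpsd hDARE x (u 0)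
  simp only [stageCost] at hcost
  linarith

end MPC

theorem maximal_constraint_violation_general
    {n m N qx qu : ℕ} [NeZero N]
    (A : Matrix (Fin n) (Fin n) ℝ) (B : Matrix (Fin n) (Fin m) ℝ)
    (Q : Matrix (Fin n) (Fin n) ℝ) (R : Matrix (Fin m) (Fin m) ℝ)
    (P Puc : Matrix (Fin n) (Fin n) ℝ) (ε : ℝ) (hε : 0 < ε)
    (Cx : Matrix (Fin qx) (Fin n) ℝ) (dx : Fin qx → ℝ)
    (Cu : Matrix (Fin qu) (Fin m) ℝ) (du : Fin qu → ℝ)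
    (Bx : (Fin n → ℝ) → ℝ) (Bu : (Fin m → ℝ) → ℝ)
    (kf : (Fin N → Fin m → ℝ) → (Fin n → ℝ) → Fin m → ℝ)
    (Ψo : (Fin N → Fin m → ℝ) → (Fin n → ℝ) → Fin N → Fin m → ℝ)
    (γ : (Fin N → Fin m → ℝ) → (Fin n → ℝ) → ℝ)
    (iT : ℕ → ℕ) (U0 : Fin N → Fin m → ℝ) (x0 : Fin n → ℝ)
    (hRsymm : R.IsSymm) (hRpd : ∀ u : Fin m → ℝ, u ≠ 0 → 0 < u ⬝ᵥ R.mulVec u)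
    (hdx : ∀ i, 0 < dx i) (hdu : ∀ j, 0 < du j)
    (hBxcont : Continuous Bx) (hBx0 : Bx 0 = 0)
    (hBxpos : ∀ x : Fin n → ℝ, x ≠ 0 → 0 < Bx x)
    (hBxru : Filter.Tendsto Bx (Filter.cocompact _) Filter.atTop)
    (hBucont : Continuous Bu) (hBu0 : Bu 0 = 0)
    (hBupos : ∀ u : Fin m → ℝ, u ≠ 0 → 0 < Bu u)
    (hBuru : Filter.Tendsto Bu (Filter.cocompact _) Filter.atTop)
    (hshift : ∀ (u : Fin N → Fin m → ℝ) (x : Fin n → ℝ),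
      mpcCost A B Q R P ε Bx Bu (shiftOp kf u x) (A.mulVec x + B.mulVec (u 0)) -
          mpcCost A B Q R P ε Bx Bu u x ≤ -(stageCost Q R ε Bx Bu x (u 0)))
    (hopt : ∀ (u : Fin N → Fin m → ℝ) (x : Fin n → ℝ),
      mpcCost A B Q R P ε Bx Bu (Ψo u x) x - mpcCost A B Q R P ε Bx Bu u x ≤ -(γ u x))
    (hγnonneg : ∀ (u : Fin N → Fin m → ℝ) (x : Fin n → ℝ), 0 ≤ γ u x)
    (hPucsymm : Puc.IsSymm) (hPucpsd : ∀ x : Fin n → ℝ, 0 ≤ x ⬝ᵥ Puc.mulVec x)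
    (hDARE : Puc = Aᵀ * Puc * A -
      Aᵀ * Puc * B * (R + Bᵀ * Puc * B)⁻¹ * Bᵀ * Puc * A + Q)
    (hconv : Filter.Tendsto (fun k => cloop A B kf Ψo iT U0 x0 k)
      Filter.atTop (nhds (0, 0))) :
    ∀ αhat : ℕ → ℝ,
      (∀ k : ℕ, αhat k =
        mpcCost A B Q R P ε Bx Bu (cloop A B kf Ψo iT U0 x0 k).1
            (cloop A B kf Ψo iT U0 x0 k).2 -
          (cloop A B kf Ψo iT U0 x0 k).2 ⬝ᵥ Puc.mulVec (cloop A B kf Ψo iT U0 x0 k).2) →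
    ∀ zx : Fin qx → ℕ → ℝ,
      (∀ i k, zx i k = sSup {t : ℝ | ∃ ξ : Fin n → ℝ,
        ε * Bx ξ ≤ αhat k ∧ t = Cx.mulVec ξ i - dx i}) →
    ∀ zu : Fin qu → ℕ → ℝ,
      (∀ j k, zu j k = sSup {t : ℝ | ∃ v : Fin m → ℝ,
        ε * Bu v ≤ αhat k ∧ t = Cu.mulVec v j - du j}) →
    (∀ (k : ℕ) (i : Fin qx) (j : Fin qu),
      Cx.mulVec (cloop A B kf Ψo iT U0 x0 k).2 i ≤ dx i + zx i k ∧
      Cu.mulVec ((cloop A B kf Ψo iT U0 x0 k).1 0) j ≤ du j + zu j k) ∧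
    (∀ (k : ℕ) (i : Fin qx) (j : Fin qu),
      zx i (k + 1) ≤ zx i k ∧ zu j (k + 1) ≤ zu j k) ∧
    (∃ k0 : ℕ, ∀ k : ℕ, k0 ≤ k →
      (∀ i : Fin qx, zx i k ≤ 0) ∧ (∀ j : Fin qu, zu j k ≤ 0)) := by
  intro αhat hα zx hzx zu hzu
  set T := cloop A B kf Ψo iT U0 x0
  have hBx_nonneg (x : Fin n → ℝ) := mul_nonneg hε.le (nonneg_of_map_zero_of_pos hBx0 hBxpos x)
  have hBu_nonneg (u : Fin m → ℝ) := mul_nonneg hε.le (nonneg_of_map_zero_of_pos hBu0 hBupos u)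
  have hdec (k : ℕ) : αhat (k + 1) + (ε * Bx (T k).2 + ε * Bu ((T k).1 0)) ≤ αhat k := by
    rw [hα, hα]
    exact valueGap_PhiIter_add_le A B kf Ψo Q P Puc R ε hshift
      (fun u x => by linarith [hopt u x, hγnonneg u x]) hRsymm hRpd hPucsymm hPucpsd hDARE
      (iT k) (T k).1 (T k).2
  have htend : Tendsto αhat atTop (𝓝 0) := by
    have hc := ((continuous_mpcCost A B Q P R ε hBxcont hBucont).sub (by fun_prop :
      Continuous fun p : (Fin N → Fin m → ℝ) × (Fin n → ℝ) => p.2 ⬝ᵥ Puc *ᵥ p.2)).tendsto (0, 0)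
    simpa [Function.comp_def, funext hα, mpcCost_zero A B Q P R ε hBx0 hBu0] using hc.comp hconv
  obtain ⟨hanti, hbarrier⟩ :=
    antitone_and_le_of_succ_add_le (fun k => add_nonneg (hBx_nonneg _) (hBu_nonneg _)) hdec htend
  obtain ⟨hxa, hxb, hxc⟩ := sublevelSup_along_antitone (y := fun k => (T k).2)
    (g := fun i ξ => (Cx *ᵥ ξ) i - dx i)
    (hBxcont.const_mul ε) (hBxru.const_mul_atTop hε) (fun i => by fun_prop)
    (fun i ξ h => mul_pos hε (hBxpos ξ (by rintro rfl; simp at h; linarith [hdx i]))) hanti htend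
    (fun k => by linarith [hbarrier k, hBu_nonneg ((T k).1 0)])
  obtain ⟨hua, hub, huc⟩ := sublevelSup_along_antitone (y := fun k => (T k).1 0)
    (g := fun j v => (Cu *ᵥ v) j - du j)
    (hBucont.const_mul ε) (hBuru.const_mul_atTop hε) (fun j => by fun_prop)
    (fun j v h => mul_pos hε (hBupos v (by rintro rfl; simp at h; linarith [hdu j]))) hanti htend
    (fun k => by linarith [hbarrier k, hBx_nonneg (T k).2])
  obtain rfl : zx = fun i k => sublevelSup (ε * Bx ·) (fun ξ => (Cx *ᵥ ξ) i - dx i) (αhat k) :=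
    funext fun i => funext (hzx i)
  obtain rfl : zu = fun j k => sublevelSup (ε * Bu ·) (fun v => (Cu *ᵥ v) j - du j) (αhat k) :=
    funext fun j => funext (hzu j)
  exact ⟨fun k i j => ⟨by linarith [hxa k i], by linarith [hua k j]⟩,
    fun k i j => ⟨hxb k i, hub k j⟩, eventually_atTop.1 (hxc.and huc)⟩

/-- (Theorem 2) Along closed-loop trajectories the state and input constraints are
violated by at most `ẑ_x(k)`, `ẑ_u(k)`; these maximal violation bounds are monotonically
nonincreasing in `k` and become nonpositive after finitely many steps. -/
theorem maximal_constraint_violation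
    {n m N qx qu : ℕ} [NeZero N]
    (A : Matrix (Fin n) (Fin n) ℝ) (B : Matrix (Fin n) (Fin m) ℝ)
    (Q : Matrix (Fin n) (Fin n) ℝ) (R : Matrix (Fin m) (Fin m) ℝ)
    (P Puc : Matrix (Fin n) (Fin n) ℝ) (ε : ℝ) (hε : 0 < ε)
    (Cx : Matrix (Fin qx) (Fin n) ℝ) (dx : Fin qx → ℝ)
    (Cu : Matrix (Fin qu) (Fin m) ℝ) (du : Fin qu → ℝ)
    (Bx : (Fin n → ℝ) → ℝ) (Bu : (Fin m → ℝ) → ℝ)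
    (kf : (Fin N → Fin m → ℝ) → (Fin n → ℝ) → Fin m → ℝ)
    (Ψo : (Fin N → Fin m → ℝ) → (Fin n → ℝ) → Fin N → Fin m → ℝ)
    (γ : (Fin N → Fin m → ℝ) → (Fin n → ℝ) → ℝ)
    (iT : ℕ → ℕ) (U0 : Fin N → Fin m → ℝ) (x0 : Fin n → ℝ)
    (hQsymm : Q.IsSymm) (hQpsd : ∀ x : Fin n → ℝ, 0 ≤ x ⬝ᵥ Q.mulVec x)
    (hRsymm : R.IsSymm) (hRpd : ∀ u : Fin m → ℝ, u ≠ 0 → 0 < u ⬝ᵥ R.mulVec u)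
    (hPsymm : P.IsSymm) (hPpd : ∀ x : Fin n → ℝ, x ≠ 0 → 0 < x ⬝ᵥ P.mulVec x)
    (hdx : ∀ i, 0 < dx i) (hdu : ∀ j, 0 < du j)
    (hXcompact : IsCompact {x : Fin n → ℝ | Cx.mulVec x ≤ dx})
    (hUcompact : IsCompact {u : Fin m → ℝ | Cu.mulVec u ≤ du})
    (hBxcont : Continuous Bx) (hBx0 : Bx 0 = 0)
    (hBxpos : ∀ x : Fin n → ℝ, x ≠ 0 → 0 < Bx x)
    (hBxru : Filter.Tendsto Bx (Filter.cocompact _) Filter.atTop)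
    (hBucont : Continuous Bu) (hBu0 : Bu 0 = 0)
    (hBupos : ∀ u : Fin m → ℝ, u ≠ 0 → 0 < Bu u)
    (hBuru : Filter.Tendsto Bu (Filter.cocompact _) Filter.atTop)
    (hshift : ∀ (u : Fin N → Fin m → ℝ) (x : Fin n → ℝ),
      mpcCost A B Q R P ε Bx Bu (shiftOp kf u x) (A.mulVec x + B.mulVec (u 0)) -
          mpcCost A B Q R P ε Bx Bu u x ≤ -(stageCost Q R ε Bx Bu x (u 0)))
    (hopt : ∀ (u : Fin N → Fin m → ℝ) (x : Fin n → ℝ),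
      mpcCost A B Q R P ε Bx Bu (Ψo u x) x - mpcCost A B Q R P ε Bx Bu u x ≤ -(γ u x))
    (hγnonneg : ∀ (u : Fin N → Fin m → ℝ) (x : Fin n → ℝ), 0 ≤ γ u x)
    (hPucsymm : Puc.IsSymm) (hPucpsd : ∀ x : Fin n → ℝ, 0 ≤ x ⬝ᵥ Puc.mulVec x)
    (hDARE : Puc = Aᵀ * Puc * A -
      Aᵀ * Puc * B * (R + Bᵀ * Puc * B)⁻¹ * Bᵀ * Puc * A + Q)
    (hconv : Filter.Tendsto (fun k => cloop A B kf Ψo iT U0 x0 k)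
      Filter.atTop (nhds (0, 0))) :
    ∀ αhat : ℕ → ℝ,
      (∀ k : ℕ, αhat k =
        mpcCost A B Q R P ε Bx Bu (cloop A B kf Ψo iT U0 x0 k).1
            (cloop A B kf Ψo iT U0 x0 k).2 -
          (cloop A B kf Ψo iT U0 x0 k).2 ⬝ᵥ Puc.mulVec (cloop A B kf Ψo iT U0 x0 k).2) →
    ∀ zx : Fin qx → ℕ → ℝ,
      (∀ i k, zx i k = sSup {t : ℝ | ∃ ξ : Fin n → ℝ,
        ε * Bx ξ ≤ αhat k ∧ t = Cx.mulVec ξ i - dx i}) →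
    ∀ zu : Fin qu → ℕ → ℝ,
      (∀ j k, zu j k = sSup {t : ℝ | ∃ v : Fin m → ℝ,
        ε * Bu v ≤ αhat k ∧ t = Cu.mulVec v j - du j}) →
    (∀ (k : ℕ) (i : Fin qx) (j : Fin qu),
      Cx.mulVec (cloop A B kf Ψo iT U0 x0 k).2 i ≤ dx i + zx i k ∧
      Cu.mulVec ((cloop A B kf Ψo iT U0 x0 k).1 0) j ≤ du j + zu j k) ∧
    (∀ (k : ℕ) (i : Fin qx) (j : Fin qu),
      zx i (k + 1) ≤ zx i k ∧ zu j (k + 1) ≤ zu j k) ∧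
    (∃ k0 : ℕ, ∀ k : ℕ, k0 ≤ k →
      (∀ i : Fin qx, zx i k ≤ 0) ∧ (∀ j : Fin qu, zu j k ≤ 0)) :=
  maximal_constraint_violation_general A B Q R P Puc ε hε Cx dx Cu du Bx Bu kf Ψo γ iT U0 x0 hRsymm
    hRpd hdx hdu hBxcont hBx0 hBxpos hBxru hBucont hBu0 hBupos hBuru hshift hopt hγnonneg hPucsymm
    hPucpsd hDARE hconv
end
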